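/- arXiv:math/0502228 — 8 statements merged into one kernel-verified Lean document; each statement's English description precedes it below -/
import Mathlib

section
/- Let F be a field, n ≥ 2, and let q, t, s₁, …, s_n be nonzero elements of F such that the values λ_J = Σ_{i=1}^n s_i q^{j_i − j_{i−1}} (for J = (j₁,…,j_{n−1}) ∈ ℕ^{n−1}, with the convention j₀ = j_n = 0) are pairwise distinct as J ranges over ℕ^{n−1}. Then for every J ∈ ℕ^{n−1} and every λ ∈ F, there exists a formal power series f ∈ F[[x₁,…,x_{n−1}]] whose coefficient of x^J := x₁^{j₁}⋯x_{n−1}^{j_{n−1}} equals 1, whose support is contained in {I ∈ ℕ^{n−1} : I_k ≥ j_k for all k}, and which satisfies D f = λ f, if and only if λ = λ_J; moreover, in that case f is unique. -/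
/-!
Statement 0: existence and uniqueness of eigenfunctions of the Macdonald-type
difference operator `D` on the ring of formal power series
`F[[x₁, …, x_{n−1}]]`, where `x_k` represents `ζ_{k+1}/ζ_k`.
-/

noncomputable section

variable {F : Type*} [Field F]

/-- The formal power series `∑_{k≥0} c k · X^(k • e)` in `MvPowerSeries (Fin m) F`,
i.e. a one-variable series `∑ c_k z^k` substituted at the monomial `X^e`.
(For `e ≠ 0`, the witness `k` with `d = k • e` is unique whenever it exists.) -/
noncomputable def substSeries {m : ℕ} (c : ℕ → F) (e : Fin m →₀ ℕ) :
    MvPowerSeries (Fin m) F :=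
  fun d => @dite _ (∃ k : ℕ, d = k • e) (Classical.dec _) (fun h => c h.choose) (fun _ => 0)

/-- Coefficients of `θ₋(z) = (1 − q⁻¹ t z)/(1 − q⁻¹ z) = 1 + ∑_{m≥1} (1 − t) q^{−m} z^m`. -/
def thetaMinusCoeff (q t : F) : ℕ → F :=
  fun k => if k = 0 then 1 else (1 - t) * (q⁻¹) ^ k

/-- Coefficients of `θ₊(z) = (1 − q t⁻¹ z)/(1 − q z) = 1 + ∑_{m≥1} (1 − t⁻¹) q^m z^m`. -/
def thetaPlusCoeff (q t : F) : ℕ → F :=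
  fun k => if k = 0 then 1 else (1 - t⁻¹) * q ^ k

/-- The monomial `x_{a+1} x_{a+2} ⋯ x_b` (paper indices), i.e. the exponent vector which is `1`
exactly on the (0-based) variable indices `a ≤ v < b`. For `a < b` with paper operator
indices `a+1 < b+1` this is the monomial representing `ζ_{b+1}/ζ_{a+1}`. -/
def ratioMonomial (n a b : ℕ) : Fin (n - 1) →₀ ℕ :=
  ∑ v : Fin (n - 1), if a ≤ (v : ℕ) ∧ (v : ℕ) < b then Finsupp.single v 1 else 0

/-- The shift operator `T_i = T_{q⁻¹, ζ_{i+1}}` (0-based `i : Fin n`): it sends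
`x_{i-1} ↦ q⁻¹ x_{i-1}` and `x_i ↦ q x_i` (paper indices, omitting indices out of range),
acting on coefficients of formal power series. -/
noncomputable def Tshift (n : ℕ) (q : F) (i : Fin n)
    (f : MvPowerSeries (Fin (n - 1)) F) : MvPowerSeries (Fin (n - 1)) F :=
  fun d =>
    (if h : i.val + 1 < n then q ^ (d ⟨i.val, by omega⟩) else 1) *
      (if h : 0 < i.val then (q ^ (d ⟨i.val - 1, by have := i.isLt; omega⟩))⁻¹ else 1) *
      f d

/-- The Macdonald-type difference operator
`D f = ∑_{i=1}^n s_i (∏_{j<i} θ₋(ζ_i/ζ_j)) (∏_{j>i} θ₊(ζ_j/ζ_i)) T_i f`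
acting on `F[[x₁, …, x_{n−1}]]` (all indices 0-based internally). -/
noncomputable def macD (n : ℕ) (q t : F) (s : Fin n → F)
    (f : MvPowerSeries (Fin (n - 1)) F) : MvPowerSeries (Fin (n - 1)) F :=
  ∑ i : Fin n,
    s i •
      ((∏ j ∈ Finset.range i.val, substSeries (thetaMinusCoeff q t) (ratioMonomial n j i.val)) *
        (∏ j ∈ Finset.Ico (i.val + 1) n, substSeries (thetaPlusCoeff q t) (ratioMonomial n i.val j)) *
        Tshift n q i f)

/-- The factor `q^{j_i − j_{i−1}}` (with `j_0 = j_n = 0`), for `J ∈ ℕ^{n−1}` and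
0-based `i : Fin n`. -/
noncomputable def qExpFactor (n : ℕ) (q : F) (J : Fin (n - 1) → ℕ) (i : Fin n) : F :=
  (if h : i.val + 1 < n then q ^ (J ⟨i.val, by omega⟩) else 1) *
    (if h : 0 < i.val then (q ^ (J ⟨i.val - 1, by have := i.isLt; omega⟩))⁻¹ else 1)

/-- The eigenvalue `λ_J = ∑_{i=1}^n s_i q^{j_i − j_{i−1}}`. -/
noncomputable def lamJ (n : ℕ) (q : F) (s : Fin n → F) (J : Fin (n - 1) → ℕ) : F :=
  ∑ i : Fin n, s i * qExpFactor n q J i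

end

section Aux

variable {F : Type*} [Field F]

lemma ratioMonomial_apply (n a b : ℕ) (v : Fin (n-1)) :
    ratioMonomial n a b v = if a ≤ (v : ℕ) ∧ (v : ℕ) < b then 1 else 0 := by
  classical
  rw [ratioMonomial, Finsupp.finset_sum_apply]
  rw [Finset.sum_congr rfl (fun w _ => ?_), Finset.sum_ite_eq' Finset.univ v
    (fun w => if a ≤ (v : ℕ) ∧ (v : ℕ) < b then (1:ℕ) else 0)]
  · simp
  · show ((if a ≤ (w : ℕ) ∧ (w : ℕ) < b then Finsupp.single w 1 else 0)) v =
      if w = v then (if a ≤ (v : ℕ) ∧ (v : ℕ) < b then 1 else 0) else 0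
    by_cases hwv : w = v
    · subst hwv
      rw [if_pos rfl]
      by_cases hc : a ≤ (w : ℕ) ∧ (w : ℕ) < b
      · rw [if_pos hc, if_pos hc, Finsupp.single_apply, if_pos rfl]
      · rw [if_neg hc, if_neg hc]; rfl
    · rw [if_neg hwv]
      by_cases hc : a ≤ (w : ℕ) ∧ (w : ℕ) < b
      · rw [if_pos hc, Finsupp.single_apply, if_neg hwv]
      · rw [if_neg hc]; rfl

lemma ratioMonomial_ne_zero {n a b : ℕ} (hab : a < b) (hb : b ≤ n - 1) :
    ratioMonomial n a b ≠ 0 := by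
  intro h
  have ha : a < n - 1 := lt_of_lt_of_le hab hb
  have h2 : ratioMonomial n a b ⟨a, ha⟩ = 0 := by rw [h]; rfl
  rw [ratioMonomial_apply] at h2
  simp [hab] at h2

lemma constantCoeff_substSeries (c : ℕ → F) (hc : c 0 = 1) {m : ℕ} {e : Fin m →₀ ℕ}
    (he : e ≠ 0) : MvPowerSeries.constantCoeff (substSeries c e) = 1 := by
  show substSeries c e 0 = 1
  rw [substSeries]
  have hex : ∃ k : ℕ, (0 : Fin m →₀ ℕ) = k • e := ⟨0, by simp⟩
  rw [dif_pos hex]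
  have hspec := hex.choose_spec
  have hch : hex.choose = 0 := by
    by_contra hk
    obtain ⟨x, hx⟩ := Finsupp.ne_iff.1 he
    have := congrArg (fun g => g x) hspec
    simp [Finsupp.smul_apply] at this
    rcases this with h | h
    · exact hk h
    · exact hx (by simpa using h)
  rw [hch, hc]

/-- The product of theta series appearing in the `i`-th term of `macD`. -/
noncomputable def Gser (n : ℕ) (q t : F) (i : Fin n) : MvPowerSeries (Fin (n-1)) F :=
  (∏ j ∈ Finset.range i.val, substSeries (thetaMinusCoeff q t) (ratioMonomial n j i.val)) *
  (∏ j ∈ Finset.Ico (i.val + 1) n, substSeries (thetaPlusCoeff q t) (ratioMonomial n i.val j))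

lemma constantCoeff_Gser (n : ℕ) (q t : F) (i : Fin n) :
    MvPowerSeries.constantCoeff (Gser n q t i) = 1 := by
  have h1 : ∀ j ∈ Finset.range i.val, MvPowerSeries.constantCoeff
      (substSeries (thetaMinusCoeff q t) (ratioMonomial n j i.val)) = 1 := by
    intro j hj
    refine constantCoeff_substSeries _ (by simp [thetaMinusCoeff]) (ratioMonomial_ne_zero ?_ ?_)
    · exact Finset.mem_range.1 hj
    · have := i.isLt; omega
  have h2 : ∀ j ∈ Finset.Ico (i.val + 1) n, MvPowerSeries.constantCoeff
      (substSeries (thetaPlusCoeff q t) (ratioMonomial n i.val j)) = 1 := by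
    intro j hj
    refine constantCoeff_substSeries _ (by simp [thetaPlusCoeff]) (ratioMonomial_ne_zero ?_ ?_)
    · exact lt_of_lt_of_le (Nat.lt_succ_self _) (Finset.mem_Ico.1 hj).1
    · have := (Finset.mem_Ico.1 hj).2
      have := (Finset.mem_Ico.1 hj).1
      have := i.isLt
      omega
  rw [Gser, map_mul, map_prod, map_prod, Finset.prod_eq_one h1, Finset.prod_eq_one h2, one_mul]

lemma Tshift_apply (n : ℕ) (q : F) (i : Fin n) (f : MvPowerSeries (Fin (n-1)) F)
    (d : Fin (n-1) →₀ ℕ) : Tshift n q i f d = qExpFactor n q (⇑d) i * f d := rfl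

/-- The kernel of the operator `macD` in the coefficient basis. -/
noncomputable def Cker (n : ℕ) (q t : F) (s : Fin n → F) (d d' : Fin (n-1) →₀ ℕ) : F :=
  ∑ i : Fin n, s i * MvPowerSeries.coeff (d - d') (Gser n q t i) * qExpFactor n q (⇑d') i

lemma coeff_macD (n : ℕ) (q t : F) (s : Fin n → F) (f : MvPowerSeries (Fin (n-1)) F)
    (d : Fin (n-1) →₀ ℕ) :
    MvPowerSeries.coeff d (macD n q t s f) =
      ∑ d' ∈ Finset.Iic d, Cker n q t s d d' * MvPowerSeries.coeff d' f := by
  have hmac : macD n q t s f = ∑ i : Fin n, s i • (Gser n q t i * Tshift n q i f) := rfl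
  rw [hmac, map_sum]
  have step : ∀ i : Fin n, MvPowerSeries.coeff d (s i • (Gser n q t i * Tshift n q i f)) =
      ∑ d' ∈ Finset.Iic d, s i * MvPowerSeries.coeff (d - d') (Gser n q t i) *
        (qExpFactor n q (⇑d') i * MvPowerSeries.coeff d' f) := by
    intro i
    rw [map_smul, smul_eq_mul, MvPowerSeries.coeff_mul, Finset.mul_sum]
    refine Finset.sum_bij' (fun p _ => p.2) (fun d' _ => ((d - d', d') :
        (Fin (n-1) →₀ ℕ) × (Fin (n-1) →₀ ℕ))) ?_ ?_ ?_ ?_ ?_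
    · intro p hp
      have h := Finset.HasAntidiagonal.mem_antidiagonal.1 hp
      exact Finset.mem_Iic.2 (le_of_le_of_eq le_add_self h)
    · intro d' hd'
      exact Finset.HasAntidiagonal.mem_antidiagonal.2 (tsub_add_cancel_of_le (Finset.mem_Iic.1 hd'))
    · intro p hp
      have h := Finset.HasAntidiagonal.mem_antidiagonal.1 hp
      have h1 : d - p.2 = p.1 := (eq_tsub_of_add_eq h).symm
      show ((d - p.2, p.2) : _ × _) = p
      rw [h1]
    · intro d' _; rfl
    · intro p hp
      have h := Finset.HasAntidiagonal.mem_antidiagonal.1 hp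
      have hp1 : p.1 = d - p.2 := eq_tsub_of_add_eq h
      have hT : MvPowerSeries.coeff p.2 (Tshift n q i f) =
          qExpFactor n q (⇑p.2) i * MvPowerSeries.coeff p.2 f := rfl
      rw [hp1, hT]; ring
  rw [Finset.sum_congr rfl (fun i _ => step i), Finset.sum_comm]
  refine Finset.sum_congr rfl (fun d' _ => ?_)
  rw [Cker, Finset.sum_mul]
  refine Finset.sum_congr rfl (fun i _ => ?_)
  ring

lemma Cker_diag (n : ℕ) (q t : F) (s : Fin n → F) (d : Fin (n-1) →₀ ℕ) :
    Cker n q t s d d = lamJ n q s ⇑d := by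
  rw [Cker, lamJ]
  refine Finset.sum_congr rfl (fun i _ => ?_)
  have h0 : d - d = (0 : Fin (n-1) →₀ ℕ) := tsub_self d
  rw [h0]
  have : MvPowerSeries.coeff (0 : Fin (n-1) →₀ ℕ) (Gser n q t i) = 1 :=
    constantCoeff_Gser n q t i
  rw [this, mul_one]

lemma coeff_macD' (n : ℕ) (q t : F) (s : Fin n → F) (f : MvPowerSeries (Fin (n-1)) F)
    (d : Fin (n-1) →₀ ℕ) :
    MvPowerSeries.coeff d (macD n q t s f) =
      lamJ n q s ⇑d * MvPowerSeries.coeff d f +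
      ∑ d' ∈ (Finset.Iic d).erase d, Cker n q t s d d' * MvPowerSeries.coeff d' f := by
  rw [coeff_macD, ← Finset.add_sum_erase _ _ (Finset.mem_Iic.2 (le_refl d)), Cker_diag]

lemma degree_lt {m : ℕ} {d' d : Fin m →₀ ℕ} (hle : d' ≤ d) (hne : d' ≠ d) :
    (∑ k, d' k) < ∑ k, d k := by
  obtain ⟨x, hx⟩ := Finsupp.ne_iff.1 hne
  refine Finset.sum_lt_sum (fun k _ => Finsupp.le_def.1 hle k) ⟨x, Finset.mem_univ x,
    lt_of_le_of_ne (Finsupp.le_def.1 hle x) hx⟩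

/-- The recursively defined eigenfunction coefficients. -/
noncomputable def eigCoeff {F : Type*} [Field F] {m : ℕ}
    (C : (Fin m →₀ ℕ) → (Fin m →₀ ℕ) → F)
    (lam : (Fin m →₀ ℕ) → F) (J : Fin m →₀ ℕ) (d : Fin m →₀ ℕ) : F :=
  if d = J then 1 else if ¬ J ≤ d then 0 else
    (lam J - lam d)⁻¹ * ∑ d' ∈ ((Finset.Iic d).erase d).attach,
      C d d'.1 * eigCoeff C lam J d'.1
termination_by ∑ k, d k
decreasing_by
  have h := d'.2
  exact degree_lt (Finset.mem_Iic.1 (Finset.mem_of_mem_erase h)) (Finset.ne_of_mem_erase h)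

/-- The candidate eigenfunction. -/
noncomputable def eigFun (n : ℕ) (q t : F) (s : Fin n → F) (J' : Fin (n-1) →₀ ℕ) :
    MvPowerSeries (Fin (n-1)) F :=
  eigCoeff (Cker n q t s) (fun d => lamJ n q s ⇑d) J'

lemma coeff_eigFun (n : ℕ) (q t : F) (s : Fin n → F) (J' d : Fin (n-1) →₀ ℕ) :
    MvPowerSeries.coeff d (eigFun n q t s J') =
      if d = J' then 1 else if ¬ J' ≤ d then 0 else
      (lamJ n q s ⇑J' - lamJ n q s ⇑d)⁻¹ *
        ∑ d' ∈ ((Finset.Iic d).erase d).attach,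
          Cker n q t s d d'.1 * MvPowerSeries.coeff d'.1 (eigFun n q t s J') := by
  show eigCoeff (Cker n q t s) (fun d => lamJ n q s ⇑d) J' d = _
  rw [eigCoeff]
  rfl

lemma eigFun_self (n : ℕ) (q t : F) (s : Fin n → F) (J' : Fin (n-1) →₀ ℕ) :
    MvPowerSeries.coeff J' (eigFun n q t s J') = 1 := by
  rw [coeff_eigFun, if_pos rfl]

lemma eigFun_supp (n : ℕ) (q t : F) (s : Fin n → F) {J' d : Fin (n-1) →₀ ℕ}
    (h : MvPowerSeries.coeff d (eigFun n q t s J') ≠ 0) : J' ≤ d := by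
  by_contra hnle
  have hdJ : d ≠ J' := by rintro rfl; exact hnle le_rfl
  rw [coeff_eigFun, if_neg hdJ, if_pos hnle] at h
  exact h rfl

lemma macD_eigFun (n : ℕ) (q t : F) (s : Fin n → F) (J' : Fin (n-1) →₀ ℕ)
    (hne : ∀ d : Fin (n-1) →₀ ℕ, d ≠ J' → lamJ n q s ⇑d ≠ lamJ n q s ⇑J') :
    macD n q t s (eigFun n q t s J') = (lamJ n q s ⇑J') • eigFun n q t s J' := by
  apply MvPowerSeries.ext
  intro d
  rw [coeff_macD', map_smul, smul_eq_mul]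
  by_cases hdJ : d = J'
  · have hz : ∑ d' ∈ (Finset.Iic d).erase d, Cker n q t s d d' *
        MvPowerSeries.coeff d' (eigFun n q t s J') = 0 := by
      refine Finset.sum_eq_zero (fun d' hd' => ?_)
      have h1 : d' ≤ d := Finset.mem_Iic.1 (Finset.mem_of_mem_erase hd')
      have h2 : d' ≠ d := Finset.ne_of_mem_erase hd'
      have : MvPowerSeries.coeff d' (eigFun n q t s J') = 0 := by
        by_contra hgz
        have h3 : J' ≤ d' := eigFun_supp n q t s hgz
        rw [← hdJ] at h3
        exact h2 (le_antisymm h1 h3)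
      rw [this, mul_zero]
    rw [hz, add_zero, hdJ]
  · by_cases hle : J' ≤ d
    · have hgd : MvPowerSeries.coeff d (eigFun n q t s J') =
          (lamJ n q s ⇑J' - lamJ n q s ⇑d)⁻¹ *
          ∑ d' ∈ ((Finset.Iic d).erase d).attach,
            Cker n q t s d d'.1 * MvPowerSeries.coeff d'.1 (eigFun n q t s J') := by
        rw [coeff_eigFun, if_neg hdJ, if_neg (not_not_intro hle)]
      have hS : (∑ d' ∈ ((Finset.Iic d).erase d).attach,
          Cker n q t s d d'.1 * MvPowerSeries.coeff d'.1 (eigFun n q t s J')) =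
          ∑ d' ∈ (Finset.Iic d).erase d, Cker n q t s d d' *
            MvPowerSeries.coeff d' (eigFun n q t s J') :=
        Finset.sum_attach ((Finset.Iic d).erase d)
          (fun x => Cker n q t s d x * MvPowerSeries.coeff x (eigFun n q t s J'))
      set S : F := ∑ d' ∈ (Finset.Iic d).erase d, Cker n q t s d d' *
        MvPowerSeries.coeff d' (eigFun n q t s J') with hSdef
      rw [hgd, hS]
      have hΔ : lamJ n q s ⇑J' - lamJ n q s ⇑d ≠ 0 :=
        sub_ne_zero.2 (Ne.symm (hne d hdJ))
      have hinv : (lamJ n q s ⇑J' - lamJ n q s ⇑d) *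
          (lamJ n q s ⇑J' - lamJ n q s ⇑d)⁻¹ = 1 := mul_inv_cancel₀ hΔ
      linear_combination (-S) * hinv
    · have hgd : MvPowerSeries.coeff d (eigFun n q t s J') = 0 := by
        rw [coeff_eigFun, if_neg hdJ, if_pos hle]
      have hz : ∑ d' ∈ (Finset.Iic d).erase d, Cker n q t s d d' *
          MvPowerSeries.coeff d' (eigFun n q t s J') = 0 := by
        refine Finset.sum_eq_zero (fun d' hd' => ?_)
        have h1 : d' ≤ d := Finset.mem_Iic.1 (Finset.mem_of_mem_erase hd')
        have : MvPowerSeries.coeff d' (eigFun n q t s J') = 0 := by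
          by_contra hgz
          exact hle (le_trans (eigFun_supp n q t s hgz) h1)
        rw [this, mul_zero]
      rw [hgd, hz, mul_zero, add_zero, mul_zero]

end Aux


/-- If the eigenvalues `λ_J` are pairwise distinct, then for every
`J ∈ ℕ^{n−1}` and every `λ ∈ F` there is a power series `f` with coefficient `1` at `x^J`,
support contained in `{I : I ≥ J componentwise}`, satisfying `D f = λ f`, if and only if
`λ = λ_J`; and in that case `f` is unique. -/
theorem statement0 {F : Type*} [Field F] (n : ℕ) (hn : 2 ≤ n)
    (q t : F) (s : Fin n → F) (hq : q ≠ 0) (ht : t ≠ 0) (hs : ∀ i, s i ≠ 0)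
    (hdist : Function.Injective (lamJ n q s)) (J : Fin (n - 1) → ℕ) (lam : F) :
    ((∃ f : MvPowerSeries (Fin (n - 1)) F,
        (MvPowerSeries.coeff (Finsupp.equivFunOnFinite.symm J) f = 1 ∧
          ∀ d : Fin (n - 1) →₀ ℕ, MvPowerSeries.coeff d f ≠ 0 → ∀ k, J k ≤ d k) ∧
        macD n q t s f = lam • f) ↔ lam = lamJ n q s J) ∧
    (lam = lamJ n q s J →
      ∃! f : MvPowerSeries (Fin (n - 1)) F,
        (MvPowerSeries.coeff (Finsupp.equivFunOnFinite.symm J) f = 1 ∧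
          ∀ d : Fin (n - 1) →₀ ℕ, MvPowerSeries.coeff d f ≠ 0 → ∀ k, J k ≤ d k) ∧
        macD n q t s f = lam • f) := by
  
  classical
  set J' : Fin (n - 1) →₀ ℕ := Finsupp.equivFunOnFinite.symm J with hJ'def
  have hJ' : ⇑J' = J := rfl
  have hne : ∀ d : Fin (n-1) →₀ ℕ, d ≠ J' → lamJ n q s ⇑d ≠ lamJ n q s ⇑J' := by
    intro d hd heq
    exact hd (DFunLike.coe_injective (hdist heq))
  have heig : macD n q t s (eigFun n q t s J') = (lamJ n q s J) • eigFun n q t s J' := by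
    rw [← hJ']; exact macD_eigFun n q t s J' hne
  have hprop₀ : MvPowerSeries.coeff J' (eigFun n q t s J') = 1 ∧
      ∀ d : Fin (n - 1) →₀ ℕ, MvPowerSeries.coeff d (eigFun n q t s J') ≠ 0 →
        ∀ k, J k ≤ d k := by
    refine ⟨eigFun_self n q t s J', fun d hd k => ?_⟩
    have := Finsupp.le_def.1 (eigFun_supp n q t s hd) k
    rwa [← hJ']
  have huniq : ∀ f₁ f₂ : MvPowerSeries (Fin (n-1)) F,
      ((MvPowerSeries.coeff J' f₁ = 1 ∧
        ∀ d : Fin (n - 1) →₀ ℕ, MvPowerSeries.coeff d f₁ ≠ 0 → ∀ k, J k ≤ d k) ∧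
        macD n q t s f₁ = (lamJ n q s J) • f₁) →
      ((MvPowerSeries.coeff J' f₂ = 1 ∧
        ∀ d : Fin (n - 1) →₀ ℕ, MvPowerSeries.coeff d f₂ ≠ 0 → ∀ k, J k ≤ d k) ∧
        macD n q t s f₂ = (lamJ n q s J) • f₂) → f₁ = f₂ := by
    intro f₁ f₂ ⟨⟨h1c, h1s⟩, h1e⟩ ⟨⟨h2c, h2s⟩, h2e⟩
    have key : ∀ N : ℕ, ∀ d : Fin (n-1) →₀ ℕ, (∑ k, d k) = N →
        MvPowerSeries.coeff d f₁ = MvPowerSeries.coeff d f₂ := by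
      intro N
      induction N using Nat.strong_induction_on with
      | _ N ih =>
        intro d hdN
        by_cases hle : J' ≤ d
        · by_cases hdJ : d = J'
          · subst hdJ; rw [h1c, h2c]
          · have e₁ := congrArg (MvPowerSeries.coeff d) h1e
            have e₂ := congrArg (MvPowerSeries.coeff d) h2e
            rw [coeff_macD', map_smul, smul_eq_mul] at e₁ e₂
            have hsums : (∑ d' ∈ (Finset.Iic d).erase d, Cker n q t s d d' *
                MvPowerSeries.coeff d' f₁) = ∑ d' ∈ (Finset.Iic d).erase d,
                Cker n q t s d d' * MvPowerSeries.coeff d' f₂ := by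
              refine Finset.sum_congr rfl (fun d' hd' => ?_)
              have hd'le : d' ≤ d := Finset.mem_Iic.1 (Finset.mem_of_mem_erase hd')
              have hd'ne : d' ≠ d := Finset.ne_of_mem_erase hd'
              rw [ih (∑ k, d' k) (hdN ▸ degree_lt hd'le hd'ne) d' rfl]
            have hfac : lamJ n q s J - lamJ n q s ⇑d ≠ 0 := by
              rw [← hJ']
              exact sub_ne_zero.2 (Ne.symm (hne d hdJ))
            have h₁ : (lamJ n q s J - lamJ n q s ⇑d) * MvPowerSeries.coeff d f₁ =
                ∑ d' ∈ (Finset.Iic d).erase d, Cker n q t s d d' *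
                  MvPowerSeries.coeff d' f₁ := by linear_combination -e₁
            have h₂ : (lamJ n q s J - lamJ n q s ⇑d) * MvPowerSeries.coeff d f₂ =
                ∑ d' ∈ (Finset.Iic d).erase d, Cker n q t s d d' *
                  MvPowerSeries.coeff d' f₂ := by linear_combination -e₂
            exact mul_left_cancel₀ hfac (by rw [h₁, h₂, hsums])
        · have hz1 : MvPowerSeries.coeff d f₁ = 0 := by
            by_contra h
            exact hle (Finsupp.le_def.2 (fun k => by rw [hJ']; exact h1s d h k))
          have hz2 : MvPowerSeries.coeff d f₂ = 0 := by
            by_contra h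
            exact hle (Finsupp.le_def.2 (fun k => by rw [hJ']; exact h2s d h k))
          rw [hz1, hz2]
    exact MvPowerSeries.ext (fun d => key (∑ k, d k) d rfl)
  constructor
  · constructor
    · rintro ⟨f, ⟨hfc, hfs⟩, hfe⟩
      have e := congrArg (MvPowerSeries.coeff J') hfe
      rw [coeff_macD', map_smul, smul_eq_mul, hfc, mul_one, mul_one] at e
      have hz : ∑ d' ∈ (Finset.Iic J').erase J', Cker n q t s J' d' *
          MvPowerSeries.coeff d' f = 0 := by
        refine Finset.sum_eq_zero (fun d' hd' => ?_)
        have h1 : d' ≤ J' := Finset.mem_Iic.1 (Finset.mem_of_mem_erase hd')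
        have h2 : d' ≠ J' := Finset.ne_of_mem_erase hd'
        have : MvPowerSeries.coeff d' f = 0 := by
          by_contra h
          exact h2 (le_antisymm h1 (Finsupp.le_def.2 (fun k => by rw [hJ']; exact hfs d' h k)))
        rw [this, mul_zero]
      rw [hz, add_zero, hJ'] at e
      exact e.symm
    · intro hlam
      exact ⟨eigFun n q t s J', hprop₀, by rw [hlam]; exact heig⟩
  · intro hlam
    refine ⟨eigFun n q t s J', ⟨hprop₀, by rw [hlam]; exact heig⟩, fun y hy => ?_⟩
    refine huniq y (eigFun n q t s J') ?_ ⟨hprop₀, heig⟩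
    rw [← hlam]
    exact hy
end

section
/- Let F be a field, n ≥ 2, and let q, t, s₁, …, s_n be nonzero elements of F. Write D(s₁,…,s_n) for the Macdonald-type difference operator with parameters s₁,…,s_n. Let J = (j₁,…,j_{n−1}) ∈ ℕ^{n−1} and set s′_i = q^{j_i − j_{i−1}} s_i for 1 ≤ i ≤ n (with j₀ = j_n = 0). If g ∈ F[[x₁,…,x_{n−1}]] satisfies D(s′₁,…,s′_n) g = (Σ_{i=1}^n s′_i) g, then the series f = x₁^{j₁}⋯x_{n−1}^{j_{n−1}} · g satisfies D(s₁,…,s_n) f = (Σ_{i=1}^n s_i q^{j_i − j_{i−1}}) f. -/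
section
variable {F : Type*} [Field F]

lemma Tshift_monomial_mul (n : ℕ) (q : F) (hq : q ≠ 0) (i : Fin n)
    (J : Fin (n - 1) → ℕ) (g : MvPowerSeries (Fin (n - 1)) F) :
    Tshift n q i ((MvPowerSeries.monomial (R := F) (Finsupp.equivFunOnFinite.symm J) 1) * g)
      = qExpFactor n q J i •
        ((MvPowerSeries.monomial (R := F) (Finsupp.equivFunOnFinite.symm J) 1) * Tshift n q i g) := by
  set J' := Finsupp.equivFunOnFinite.symm J with hJ'
  funext d
  have hcoe : ∀ (h : MvPowerSeries (Fin (n-1)) F),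
      ((MvPowerSeries.monomial (R := F) J' 1) * h) d
        = if J' ≤ d then h (d - J') else 0 := by
    intro h
    have := MvPowerSeries.coeff_monomial_mul (R := F) (m := d) (n := J') (φ := h) 1
    simp only [one_mul] at this
    exact this
  have hL : Tshift n q i ((MvPowerSeries.monomial (R := F) J' 1) * g) d
      = (if h : i.val + 1 < n then q ^ (d ⟨i.val, by omega⟩) else 1) *
        (if h : 0 < i.val then (q ^ (d ⟨i.val - 1, by have := i.isLt; omega⟩))⁻¹ else 1) *
        (((MvPowerSeries.monomial (R := F) J' 1) * g) d) := rfl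
  have hR : (qExpFactor n q J i •
        ((MvPowerSeries.monomial (R := F) J' 1) * Tshift n q i g)) d
      = qExpFactor n q J i * (((MvPowerSeries.monomial (R := F) J' 1) * Tshift n q i g) d) := rfl
  rw [hL, hR, hcoe, hcoe]
  by_cases hle : J' ≤ d
  · simp only [if_pos hle]
    have hJle : ∀ v, J v ≤ d v := fun v => hle v
    have hsub : ∀ v : Fin (n-1), (d - J') v = d v - J v := fun v => by
      simp [hJ', Finsupp.tsub_apply]
    have e1 : ∀ v : Fin (n-1), q ^ (d v - J v) = q ^ (d v) * (q ^ (J v))⁻¹ :=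
      fun v => pow_sub₀ q hq (hJle v)
    unfold Tshift qExpFactor
    simp only [hsub, e1]
    split_ifs <;> field_simp <;> ring
  · simp [hle, Tshift]

end

/-- If `g` satisfies `D(s′) g = (∑ s′_i) g` where
`s′_i = q^{j_i − j_{i−1}} s_i`, then `f = x^J · g` satisfies
`D(s) f = (∑_i s_i q^{j_i − j_{i−1}}) f`. -/
theorem statement1 {F : Type*} [Field F] (n : ℕ) (hn : 2 ≤ n)
    (q t : F) (s : Fin n → F) (hq : q ≠ 0) (ht : t ≠ 0) (hs : ∀ i, s i ≠ 0)
    (J : Fin (n - 1) → ℕ) (g : MvPowerSeries (Fin (n - 1)) F)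
    (hg : macD n q t (fun i => qExpFactor n q J i * s i) g
        = (∑ i : Fin n, qExpFactor n q J i * s i) • g) :
    macD n q t s
        ((MvPowerSeries.monomial (R := F) (Finsupp.equivFunOnFinite.symm J) 1) * g)
      = lamJ n q s J •
          ((MvPowerSeries.monomial (R := F) (Finsupp.equivFunOnFinite.symm J) 1) * g) := by
  set M := (MvPowerSeries.monomial (R := F) (Finsupp.equivFunOnFinite.symm J) 1) with hM
  set c := fun i => qExpFactor n q J i with hc
  have key : macD n q t s (M * g) = M * macD n q t (fun i => c i * s i) g := by
    unfold macD
    rw [Finset.mul_sum]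
    refine Finset.sum_congr rfl fun i _ => ?_
    beta_reduce
    rw [Tshift_monomial_mul n q hq i J g, mul_smul_comm, smul_smul,
      mul_smul_comm]
    congr 1
    · ring
    · ring
  rw [key, hg]
  rw [mul_smul_comm]
  unfold lamJ
  congr 1
  exact Finset.sum_congr rfl fun i _ => mul_comm _ _
end

section
/- Let q, t, s₁, s₂ be nonzero complex numbers such that (q;q)_k ≠ 0 and (q s₁/s₂;q)_k ≠ 0 for all k ≥ 1. Define g₀ = 1 and g_k = [(q t^{−1};q)_k (q t^{−1} s₁/s₂;q)_k / ((q;q)_k (q s₁/s₂;q)_k)] t^k for k ≥ 1. Then for every k ≥ 1 the recurrence (s₁ q^k + s₂ q^{−k}) g_k − (s₁ q^k t^{−1} + s₂ t q^{−k}) g_{k−1} = (s₁ + s₂)(g_k − g_{k−1}) holds; equivalently, the formal power series g(ζ) = Σ_{k≥0} g_k ζ^k satisfies the q-difference equation s₁(1 − q t^{−1}ζ) g(qζ) + s₂(1 − q^{−1} t ζ) g(q^{−1}ζ) = (s₁ + s₂)(1 − ζ) g(ζ), so that f₀(ζ₁,ζ₂) = (1 − ζ₂/ζ₁)·₂φ₁(q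 t^{−1}, q t^{−1}s₁/s₂; q s₁/s₂; q, t ζ₂/ζ₁) is an eigenfunction of the n = 2 Macdonald-type difference operator D with eigenvalue s₁ + s₂. -/
/-!
The coefficients `g_k` are the terms of a basic hypergeometric series, so `g_k / g_{k-1}` is a
rational function of `x = q^k`. Multiplying the recurrence by the denominator of that ratio
reduces it to a rational identity in `x`, `t`, `s₁`, `s₂`, whose two sides both factor as
`(x - 1)(x - t)(s₁x - s₂)(s₁x - s₂t) / (t x s₂)`.
-/

/-- The q-shifted factorial `(a;q)_n = ∏_{k=0}^{n−1} (1 − a q^k)`. -/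
noncomputable def qp (q a : ℂ) (n : ℕ) : ℂ := ∏ k ∈ Finset.range n, (1 - a * q ^ k)

/-- The `k`-th coefficient of `₂φ₁(a, b; c; q, z)`. -/
noncomputable def phi21Coeff (q a b c z : ℂ) (k : ℕ) : ℂ :=
  qp q a k * qp q b k / (qp q q k * qp q c k) * z ^ k

lemma qp_succ (q a : ℂ) (n : ℕ) : qp q a (n + 1) = qp q a n * (1 - a * q ^ n) :=
  Finset.prod_range_succ _ n

lemma ne_zero_of_qp_succ_ne_zero {q a : ℂ} {n : ℕ} (h : qp q a (n + 1) ≠ 0) :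
    qp q a n ≠ 0 ∧ 1 - a * q ^ n ≠ 0 := by
  rwa [qp_succ, mul_ne_zero_iff] at h

lemma phi21Coeff_succ_mul (q a b c z : ℂ) {k : ℕ}
    (hqq : qp q q (k + 1) ≠ 0) (hqc : qp q c (k + 1) ≠ 0) :
    phi21Coeff q a b c z (k + 1) * ((1 - q * q ^ k) * (1 - c * q ^ k))
      = phi21Coeff q a b c z k * ((1 - a * q ^ k) * (1 - b * q ^ k) * z) := by
  obtain ⟨hqq_k, hq_fac⟩ := ne_zero_of_qp_succ_ne_zero hqq
  obtain ⟨hqc_k, hc_fac⟩ := ne_zero_of_qp_succ_ne_zero hqc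
  rw [mul_comm] at hq_fac hc_fac
  simp only [phi21Coeff, qp_succ, pow_succ]
  field_simp

lemma shift_coeff_identity {x t s₁ s₂ : ℂ} (hx : x ≠ 0) (ht : t ≠ 0) (hs₂ : s₂ ≠ 0) :
    (s₁ * x + s₂ * x⁻¹ - (s₁ + s₂)) * ((1 - x * t⁻¹) * (1 - x * t⁻¹ * s₁ / s₂) * t)
      = (s₁ * x * t⁻¹ + s₂ * t * x⁻¹ - (s₁ + s₂)) * ((1 - x) * (1 - x * s₁ / s₂)) := by
  field_simp
  ring

theorem statement2_general (q t s₁ s₂ : ℂ) (hq : q ≠ 0) (ht : t ≠ 0)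
    (hs₂ : s₂ ≠ 0)
    (hqq : ∀ k : ℕ, 1 ≤ k → qp q q k ≠ 0)
    (hqs : ∀ k : ℕ, 1 ≤ k → qp q (q * s₁ / s₂) k ≠ 0)
    (g : ℕ → ℂ)
    (hg : ∀ k : ℕ, g k =
      qp q (q * t⁻¹) k * qp q (q * t⁻¹ * s₁ / s₂) k /
        (qp q q k * qp q (q * s₁ / s₂) k) * t ^ k) :
    ∀ k : ℕ, 1 ≤ k →
      (s₁ * q ^ k + s₂ * (q ^ k)⁻¹) * g k
          - (s₁ * q ^ k * t⁻¹ + s₂ * t * (q ^ k)⁻¹) * g (k - 1)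
        = (s₁ + s₂) * (g k - g (k - 1)) := by
  rintro (_ | m) hk
  · omega
  have hq_fac := (ne_zero_of_qp_succ_ne_zero (hqq (m + 1) le_add_self)).2
  have hs_fac := (ne_zero_of_qp_succ_ne_zero (hqs (m + 1) le_add_self)).2
  have ratio := phi21Coeff_succ_mul q (q * t⁻¹) (q * t⁻¹ * s₁ / s₂) (q * s₁ / s₂) t
    (hqq (m + 1) le_add_self) (hqs (m + 1) le_add_self)
  simp only [phi21Coeff, ← hg] at ratio
  have key := shift_coeff_identity (s₁ := s₁) (pow_ne_zero (m + 1) hq) ht hs₂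
  rw [Nat.add_sub_cancel]
  apply mul_right_cancel₀ (mul_ne_zero hq_fac hs_fac)
  linear_combination (s₁ * q ^ (m + 1) + s₂ * (q ^ (m + 1))⁻¹ - (s₁ + s₂)) * ratio + g m * key

/-- The coefficients
`g_k = (q t⁻¹;q)_k (q t⁻¹ s₁/s₂;q)_k / ((q;q)_k (q s₁/s₂;q)_k) · t^k` (with `g₀ = 1`)
satisfy, for every `k ≥ 1`, the recurrence
`(s₁ q^k + s₂ q^{−k}) g_k − (s₁ q^k t⁻¹ + s₂ t q^{−k}) g_{k−1} = (s₁+s₂)(g_k − g_{k−1})`,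
i.e. `f₀ = (1 − ζ₂/ζ₁)·₂φ₁(qt⁻¹, qt⁻¹s₁/s₂; qs₁/s₂; q, tζ₂/ζ₁)` is an eigenfunction of
the `n = 2` Macdonald-type difference operator with eigenvalue `s₁ + s₂`. -/
theorem statement2 (q t s₁ s₂ : ℂ) (hq : q ≠ 0) (ht : t ≠ 0)
    (hs₁ : s₁ ≠ 0) (hs₂ : s₂ ≠ 0)
    (hqq : ∀ k : ℕ, 1 ≤ k → qp q q k ≠ 0)
    (hqs : ∀ k : ℕ, 1 ≤ k → qp q (q * s₁ / s₂) k ≠ 0)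
    (g : ℕ → ℂ)
    (hg : ∀ k : ℕ, g k =
      qp q (q * t⁻¹) k * qp q (q * t⁻¹ * s₁ / s₂) k /
        (qp q q k * qp q (q * s₁ / s₂) k) * t ^ k) :
    ∀ k : ℕ, 1 ≤ k →
      (s₁ * q ^ k + s₂ * (q ^ k)⁻¹) * g k
          - (s₁ * q ^ k * t⁻¹ + s₂ * t * (q ^ k)⁻¹) * g (k - 1)
        = (s₁ + s₂) * (g k - g (k - 1)) :=
  statement2_general q t s₁ s₂ hq ht hs₂ hqq hqs g hg
end

section
/- Let m ≥ 1 be an integer and let q, s₁, s₂, ζ₁, ζ₂ be nonzero complex numbers such that (q;q)_k ≠ 0, (q s₁/s₂;q)_k ≠ 0, (q s₂/s₁;q)_k ≠ 0 for 1 ≤ k ≤ m−1, and s₂ − q^k s₁ ≠ 0 for 1 ≤ k ≤ m−1. Define f₀(ζ₁,ζ₂,s₁,s₂) = (1 − ζ₂/ζ₁) Σ_{k=0}^{m−1} [(q^{1−m};q)_k (q^{1−m} s₁/s₂;q)_k / ((q;q)_k (q s₁/s₂;q)_k)] q^{mk} (ζ₂/ζ₁)^k. Then ζ₁^m f₀(ζ₁,ζ₂,s₁,s₂)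 is a polynomial in ζ₁, ζ₂, and it is antisymmetric under the deformed Weyl group action: ∏_{k=1}^{m−1} [(s₁ − q^k s₂)/(s₂ − q^k s₁)] · ζ₂^m f₀(ζ₂, ζ₁, s₂, s₁) = − ζ₁^m f₀(ζ₁, ζ₂, s₁, s₂). -/
/-- The terminating first eigenfunction at `t = q^m`:
`f₀(ζ₁,ζ₂,s₁,s₂) = (1 − ζ₂/ζ₁) ∑_{k=0}^{m−1} (q^{1−m};q)_k (q^{1−m}s₁/s₂;q)_k /
((q;q)_k (q s₁/s₂;q)_k) · q^{mk} (ζ₂/ζ₁)^k`. -/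
noncomputable def f₀ (m : ℕ) (q ζ₁ ζ₂ s₁ s₂ : ℂ) : ℂ :=
  (1 - ζ₂ / ζ₁) *
    ∑ k ∈ Finset.range m,
      qp q (q * (q ^ m)⁻¹) k * qp q (q * (q ^ m)⁻¹ * s₁ / s₂) k /
        (qp q q k * qp q (q * s₁ / s₂) k) * (q ^ m) ^ k * (ζ₂ / ζ₁) ^ k

/-!
Put `x = s₁ / s₂`. The coefficients of `f₀` are `c_k = ∏_{j<k} ρ_j`, where the ratio `ρ_j` only
involves `u = q^(j+1)` and `v = q^(m-1-j)`, with `u v = q^m`. Swapping `s₁ ↔ s₂` replaces `x` by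
`x⁻¹` and exchanges the roles of `u` and `v`, so the ratio at `j` for `x` is the inverse of the ratio
at `m - 2 - j` for `x⁻¹`. Hence the Weyl factor, which equals `c_{m-1}`, carries the reversed
coefficients of the swapped series onto the `c_k`, and since `ζ₁^m f₀ = (ζ₁ - ζ₂) ∑ c_k ζ₂^k ζ₁^(m-1-k)`
this is the antisymmetry.
-/

open Finset

lemma prod_Icc_one_eq_prod_range {M : Type*} [CommMonoid M] (f : ℕ → M) (n : ℕ) :
    ∏ i ∈ Icc 1 n, f i = ∏ j ∈ range n, f (j + 1) := by
  rw [range_eq_Ico, prod_Ico_add', ← Ico_add_one_right_eq_Icc]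

lemma prod_range_sub_eq_prod_range_succ {M : Type*} [CommMonoid M] (f : ℕ → M) (n : ℕ) :
    ∏ j ∈ range n, f (n - j) = ∏ j ∈ range n, f (j + 1) := by
  rw [← prod_range_reflect (fun j ↦ f (j + 1))]
  refine prod_congr rfl fun j hj ↦ ?_
  have := mem_range.mp hj
  congr 1
  omega

lemma one_sub_mul_pow_ne_zero_of_qp_ne_zero {q a : ℂ} {l : ℕ} (h : qp q (q * a) l ≠ 0)
    (hl : 1 ≤ l) : 1 - a * q ^ l ≠ 0 := by
  obtain ⟨n, rfl⟩ := Nat.exists_eq_add_of_le' hl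
  rw [qp, prod_range_succ] at h
  convert right_ne_zero_of_mul h using 2
  ring

noncomputable def coeff (m : ℕ) (q x : ℂ) (k : ℕ) : ℂ :=
  qp q (q * (q ^ m)⁻¹) k * qp q (q * (q ^ m)⁻¹ * x) k / (qp q q k * qp q (q * x) k) * (q ^ m) ^ k

lemma f₀_eq_sum_coeff (m : ℕ) (q ζ₁ ζ₂ s₁ s₂ : ℂ) :
    f₀ m q ζ₁ ζ₂ s₁ s₂ = (1 - ζ₂ / ζ₁) * ∑ k ∈ range m, coeff m q (s₁ / s₂) k * (ζ₂ / ζ₁) ^ k := by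
  simp only [f₀, coeff, ← mul_div_assoc]

/-- With `u = q^(j+1)` and `v = q^(m-1-j)`, so that `u v = q^m`, this is `coeff (j+1) / coeff j`. -/
noncomputable def coeffRatio (x u v : ℂ) : ℂ :=
  (1 - v) * (x - v) * u / v / ((1 - u) * (1 - x * u))

lemma coeffRatio_mul_coeffRatio_inv {x u v : ℂ} (hx : x ≠ 0) (hu : u ≠ 0) (hv : v ≠ 0)
    (h1u : 1 - u ≠ 0) (h1v : 1 - v ≠ 0) (hxu : 1 - x * u ≠ 0) (hxv : 1 - x⁻¹ * v ≠ 0) :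
    coeffRatio x u v * coeffRatio x⁻¹ v u = 1 := by
  have hxv' : x - v ≠ 0 := by
    rwa [show x - v = x * (1 - x⁻¹ * v) by field_simp, mul_ne_zero_iff_left hx]
  have hxu' : x⁻¹ - u ≠ 0 := by
    rwa [show x⁻¹ - u = x⁻¹ * (1 - x * u) by field_simp, mul_ne_zero_iff_left (inv_ne_zero hx)]
  unfold coeffRatio
  field_simp

lemma coeff_eq_prod_coeffRatio {m k : ℕ} {q : ℂ} (x : ℂ) (hq : q ≠ 0) (hk : k ≤ m) :
    coeff m q x k = ∏ j ∈ range k, coeffRatio x (q ^ (j + 1)) (q ^ (m - 1 - j)) := by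
  rw [coeff, show (q ^ m) ^ k = ∏ _j ∈ range k, q ^ m by simp]
  simp only [qp, ← prod_mul_distrib, ← prod_div_distrib]
  refine prod_congr rfl fun j hj ↦ ?_
  have hqm : q ^ m = q * q ^ j * q ^ (m - 1 - j) := by
    rw [← pow_succ', ← pow_add]; congr 1; have := mem_range.mp hj; omega
  have hv : q ^ (m - 1 - j) ≠ 0 := by positivity
  rw [coeffRatio, hqm, pow_succ', show q * x * q ^ j = x * (q * q ^ j) by ring,
    div_mul_eq_mul_div]
  congr 1
  field_simp
  ring

lemma prod_coeffRatio_eq {n : ℕ} {q : ℂ} (x : ℂ) (hq : q ≠ 0)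
    (hQ : ∀ l, 1 ≤ l → l ≤ n → 1 - q ^ l ≠ 0) :
    ∏ j ∈ range n, coeffRatio x (q ^ (j + 1)) (q ^ (n - j))
      = ∏ i ∈ Icc 1 n, (x - q ^ i) / (1 - x * q ^ i) := by
  simp only [coeffRatio, prod_div_distrib, prod_mul_distrib]
  rw [prod_range_sub_eq_prod_range_succ (fun i ↦ 1 - q ^ i),
    prod_range_sub_eq_prod_range_succ (fun i ↦ x - q ^ i),
    prod_range_sub_eq_prod_range_succ (fun i ↦ q ^ i), prod_Icc_one_eq_prod_range,
    prod_Icc_one_eq_prod_range]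
  have hA : ∏ j ∈ range n, (1 - q ^ (j + 1)) ≠ 0 :=
    prod_ne_zero_iff.mpr fun j hj ↦ hQ (j + 1) (by omega) (by have := mem_range.mp hj; omega)
  have hB : ∏ j ∈ range n, q ^ (j + 1) ≠ 0 := prod_ne_zero_iff.mpr fun _ _ ↦ pow_ne_zero _ hq
  field_simp

lemma coeff_succ {m k : ℕ} {q : ℂ} (x : ℂ) (hq : q ≠ 0) (hk : k < m) :
    coeff m q x (k + 1) = coeff m q x k * coeffRatio x (q ^ (k + 1)) (q ^ (m - 1 - k)) := by
  rw [coeff_eq_prod_coeffRatio x hq hk, coeff_eq_prod_coeffRatio x hq hk.le, prod_range_succ]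

lemma prod_mul_coeff_inv {m : ℕ} {q x : ℂ} (hq : q ≠ 0) (hx : x ≠ 0)
    (hQ : ∀ l, 1 ≤ l → l ≤ m - 1 → 1 - q ^ l ≠ 0)
    (hA : ∀ l, 1 ≤ l → l ≤ m - 1 → 1 - x * q ^ l ≠ 0)
    (hB : ∀ l, 1 ≤ l → l ≤ m - 1 → 1 - x⁻¹ * q ^ l ≠ 0) :
    ∀ n ≤ m - 1, (∏ i ∈ Icc 1 (m - 1), (x - q ^ i) / (1 - x * q ^ i)) * coeff m q x⁻¹ n
      = coeff m q x (m - 1 - n) := by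
  intro n
  induction n with
  | zero =>
    intro _
    rw [← prod_coeffRatio_eq x hq hQ, ← coeff_eq_prod_coeffRatio x hq (Nat.sub_le m 1)]
    simp [coeff, qp]
  | succ n ih =>
    intro hn
    have hsplit : coeff m q x (m - 1 - n)
        = coeff m q x (m - 1 - (n + 1)) * coeffRatio x (q ^ (m - 1 - n)) (q ^ (n + 1)) := by
      have h := coeff_succ x hq (m := m) (k := m - 1 - (n + 1)) (by omega)
      rwa [show m - 1 - (n + 1) + 1 = m - 1 - n by omega,
        show m - 1 - (m - 1 - (n + 1)) = n + 1 by omega] at h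
    have hinv : coeffRatio x (q ^ (m - 1 - n)) (q ^ (n + 1))
        * coeffRatio x⁻¹ (q ^ (n + 1)) (q ^ (m - 1 - n)) = 1 :=
      coeffRatio_mul_coeffRatio_inv hx (pow_ne_zero _ hq) (pow_ne_zero _ hq)
        (hQ _ (by omega) (by omega)) (hQ _ (by omega) hn) (hA _ (by omega) (by omega))
        (hB _ (by omega) hn)
    rw [coeff_succ x⁻¹ hq (by omega), ← mul_assoc, ih (by omega), hsplit, mul_assoc, hinv,
      mul_one]

lemma prod_mul_sum_coeff_inv {m : ℕ} {q x : ℂ} (hq : q ≠ 0) (hx : x ≠ 0)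
    (hQ : ∀ l, 1 ≤ l → l ≤ m - 1 → 1 - q ^ l ≠ 0)
    (hA : ∀ l, 1 ≤ l → l ≤ m - 1 → 1 - x * q ^ l ≠ 0)
    (hB : ∀ l, 1 ≤ l → l ≤ m - 1 → 1 - x⁻¹ * q ^ l ≠ 0) (a b : ℂ) :
    (∏ i ∈ Icc 1 (m - 1), (x - q ^ i) / (1 - x * q ^ i)) *
        ∑ k ∈ range m, coeff m q x⁻¹ k * a ^ k * b ^ (m - 1 - k)
      = ∑ k ∈ range m, coeff m q x k * b ^ k * a ^ (m - 1 - k) := by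
  rw [mul_sum, ← sum_range_reflect]
  refine sum_congr rfl fun k hk ↦ ?_
  have hk := mem_range.mp hk
  rw [← mul_assoc, ← mul_assoc, prod_mul_coeff_inv hq hx hQ hA hB (m - 1 - k) (by omega),
    show m - 1 - (m - 1 - k) = k by omega]
  ring

lemma pow_mul_one_sub_div_mul_sum {a : ℂ} (ha : a ≠ 0) (b : ℂ) (m : ℕ) (c : ℕ → ℂ) :
    a ^ m * ((1 - b / a) * ∑ k ∈ range m, c k * (b / a) ^ k)
      = (a - b) * ∑ k ∈ range m, c k * b ^ k * a ^ (m - 1 - k) := by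
  rw [mul_sum, mul_sum, mul_sum]
  refine sum_congr rfl fun k hk ↦ ?_
  rw [show a ^ m = a ^ (k + 1) * a ^ (m - 1 - k) by
    rw [← pow_add]; congr 1; have := mem_range.mp hk; omega, div_pow]
  field_simp
  ring

lemma pow_mul_f₀ {ζ₁ : ℂ} (hζ₁ : ζ₁ ≠ 0) (m : ℕ) (q ζ₂ s₁ s₂ : ℂ) :
    ζ₁ ^ m * f₀ m q ζ₁ ζ₂ s₁ s₂
      = (ζ₁ - ζ₂) * ∑ k ∈ range m, coeff m q (s₁ / s₂) k * ζ₂ ^ k * ζ₁ ^ (m - 1 - k) := by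
  rw [f₀_eq_sum_coeff, pow_mul_one_sub_div_mul_sum hζ₁]

theorem statement4_general (m : ℕ) (q s₁ s₂ ζ₁ ζ₂ : ℂ)
    (hq : q ≠ 0) (hs₁ : s₁ ≠ 0) (hs₂ : s₂ ≠ 0) (hζ₁ : ζ₁ ≠ 0) (hζ₂ : ζ₂ ≠ 0)
    (h1 : ∀ k : ℕ, 1 ≤ k → k ≤ m - 1 → qp q q k ≠ 0)
    (h2 : ∀ k : ℕ, 1 ≤ k → k ≤ m - 1 → qp q (q * s₁ / s₂) k ≠ 0)
    (h3 : ∀ k : ℕ, 1 ≤ k → k ≤ m - 1 → qp q (q * s₂ / s₁) k ≠ 0) :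
    (∃ P : MvPolynomial (Fin 2) ℂ, ∀ z₁ z₂ : ℂ, z₁ ≠ 0 → z₂ ≠ 0 →
        MvPolynomial.eval ![z₁, z₂] P = z₁ ^ m * f₀ m q z₁ z₂ s₁ s₂) ∧
      (∏ k ∈ Finset.Icc 1 (m - 1), (s₁ - q ^ k * s₂) / (s₂ - q ^ k * s₁)) *
          (ζ₂ ^ m * f₀ m q ζ₂ ζ₁ s₂ s₁)
        = -(ζ₁ ^ m * f₀ m q ζ₁ ζ₂ s₁ s₂) := by
  set x := s₁ / s₂ with hx
  have hQ : ∀ l, 1 ≤ l → l ≤ m - 1 → 1 - q ^ l ≠ 0 := fun l hl hlm ↦ by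
    simpa using one_sub_mul_pow_ne_zero_of_qp_ne_zero (a := 1) (by simpa using h1 l hl hlm) hl
  have hA : ∀ l, 1 ≤ l → l ≤ m - 1 → 1 - x * q ^ l ≠ 0 := fun l hl hlm ↦
    one_sub_mul_pow_ne_zero_of_qp_ne_zero (by rw [← mul_div_assoc]; exact h2 l hl hlm) hl
  have hB : ∀ l, 1 ≤ l → l ≤ m - 1 → 1 - x⁻¹ * q ^ l ≠ 0 := fun l hl hlm ↦
    one_sub_mul_pow_ne_zero_of_qp_ne_zero (by rw [inv_div, ← mul_div_assoc]; exact h3 l hl hlm) hl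
  have hG : ∏ k ∈ Icc 1 (m - 1), (s₁ - q ^ k * s₂) / (s₂ - q ^ k * s₁)
      = ∏ k ∈ Icc 1 (m - 1), (x - q ^ k) / (1 - x * q ^ k) := by
    refine prod_congr rfl fun k _ ↦ ?_
    rw [← mul_div_mul_right (x - q ^ k) _ hs₂]
    congr 1 <;> rw [hx] <;> field_simp
  refine ⟨⟨(MvPolynomial.X 0 - MvPolynomial.X 1) * ∑ k ∈ range m,
      MvPolynomial.C (coeff m q x k) * MvPolynomial.X 1 ^ k * MvPolynomial.X 0 ^ (m - 1 - k),
      fun z₁ z₂ hz₁ _ ↦ by simp [pow_mul_f₀ hz₁, x]⟩, ?_⟩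
  rw [pow_mul_f₀ hζ₂, pow_mul_f₀ hζ₁, ← inv_div s₁ s₂, hG, mul_left_comm,
    prod_mul_sum_coeff_inv hq (div_ne_zero hs₁ hs₂) hQ hA hB]
  ring

/-- `ζ₁^m f₀(ζ₁,ζ₂,s₁,s₂)` is a polynomial in `ζ₁, ζ₂`, and it is
antisymmetric under the deformed Weyl group action `π_m(σ₁)`. -/
theorem statement4 (m : ℕ) (hm : 1 ≤ m) (q s₁ s₂ ζ₁ ζ₂ : ℂ)
    (hq : q ≠ 0) (hs₁ : s₁ ≠ 0) (hs₂ : s₂ ≠ 0) (hζ₁ : ζ₁ ≠ 0) (hζ₂ : ζ₂ ≠ 0)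
    (h1 : ∀ k : ℕ, 1 ≤ k → k ≤ m - 1 → qp q q k ≠ 0)
    (h2 : ∀ k : ℕ, 1 ≤ k → k ≤ m - 1 → qp q (q * s₁ / s₂) k ≠ 0)
    (h3 : ∀ k : ℕ, 1 ≤ k → k ≤ m - 1 → qp q (q * s₂ / s₁) k ≠ 0)
    (h4 : ∀ k : ℕ, 1 ≤ k → k ≤ m - 1 → s₂ - q ^ k * s₁ ≠ 0) :
    (∃ P : MvPolynomial (Fin 2) ℂ, ∀ z₁ z₂ : ℂ, z₁ ≠ 0 → z₂ ≠ 0 →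
        MvPolynomial.eval ![z₁, z₂] P = z₁ ^ m * f₀ m q z₁ z₂ s₁ s₂) ∧
      (∏ k ∈ Finset.Icc 1 (m - 1), (s₁ - q ^ k * s₂) / (s₂ - q ^ k * s₁)) *
          (ζ₂ ^ m * f₀ m q ζ₂ ζ₁ s₂ s₁)
        = -(ζ₁ ^ m * f₀ m q ζ₁ ζ₂ s₁ s₂) :=
  statement4_general m q s₁ s₂ ζ₁ ζ₂ hq hs₁ hs₂ hζ₁ hζ₂ h1 h2 h3
end

section
/- Let m ≥ 1 and 0 ≤ k ≤ m−1 be integers, and let q, s₁, s₂, s₃, ζ₁, ζ₂, ζ₃ be nonzero complex numbers such that (q;q)_l ≠ 0 for l ≤ m−1 and (q^{a} s_i/s_j;q)_l ≠ 0 for all i ≠ j, 1 ≤ a ≤ k+1, l ≤ m−1, and s_i − q^l s_j ≠ 0 for i ≠ j, 1 ≤ l ≤ m−1. Define φ_k(ζ;s) = (ζ₃/ζ₁)^k (q s₁/s₃)^k [(q^{1−m};q)_k² (q^m;q)_k² / ((q;q)_k (q s₁/s₂;q)_k (q s₂/s₃;q)_k (q s₁/s₃;q)_k)] · ∏_{1≤i<j≤3}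 Σ_{l=0}^{m−1−k} [(q^{k+1−m};q)_l (q^{1−m} s_i/s_j;q)_l / ((q;q)_l (q^{k+1} s_i/s_j;q)_l)] q^{ml} (ζ_j/ζ_i)^l (the terminating series ₂φ₁(q^{k+1}t^{−1}, q t^{−1}s_i/s_j; q^{k+1}s_i/s_j; q, tζ_j/ζ_i) at t = q^m). Then Q = ζ₁^{2m−2} ζ₂^{m−1} φ_k is a polynomial in ζ₁, ζ₂, ζ₃, and Q is invariant under the deformed Weyl group action: for i = 1, 2, ∏_{l=1}^{m−1} [(s_i − q^l s_{i+1})/(s_{i+1} − q^l s_i)] · Q(…, ζ_{i+1}, ζ_i, …, s_{i+1}, s_i, …) = Q(ζ₁,ζ₂,ζ₃,s₁,s₂,s₃), where the indicated arguments ζ_i, ζ_{i+1} and s_i, s_{i+1} are interchanged. -/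
/-- The `n = 3` terminating building block `φ_k` at `t = q^m`:
`φ_k = (ζ₃/ζ₁)^k (q s₁/s₃)^k (q^{1−m};q)_k² (q^m;q)_k² /
((q;q)_k (q s₁/s₂;q)_k (q s₂/s₃;q)_k (q s₁/s₃;q)_k) ·
∏_{1≤i<j≤3} ∑_{l=0}^{m−1−k} (q^{k+1−m};q)_l (q^{1−m}s_i/s_j;q)_l /
((q;q)_l (q^{k+1}s_i/s_j;q)_l) · q^{ml} (ζ_j/ζ_i)^l`  (0-based indexing of `ζ, s`). -/
noncomputable def phiK (m k : ℕ) (q : ℂ) (ζ s : Fin 3 → ℂ) : ℂ :=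
  (ζ 2 / ζ 0) ^ k * (q * s 0 / s 2) ^ k *
    (qp q (q * (q ^ m)⁻¹) k ^ 2 * qp q (q ^ m) k ^ 2 /
      (qp q q k * qp q (q * s 0 / s 1) k * qp q (q * s 1 / s 2) k *
        qp q (q * s 0 / s 2) k)) *
    ∏ p ∈ Finset.univ.filter (fun p : Fin 3 × Fin 3 => p.1 < p.2),
      ∑ l ∈ Finset.range (m - k),
        qp q (q ^ (k + 1) * (q ^ m)⁻¹) l * qp q (q * (q ^ m)⁻¹ * s p.1 / s p.2) l /
          (qp q q l * qp q (q ^ (k + 1) * s p.1 / s p.2) l) *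
          (q ^ m) ^ l * (ζ p.2 / ζ p.1) ^ l

/-- `Q = ζ₁^{2m−2} ζ₂^{m−1} φ_k`. -/
noncomputable def Qfun (m k : ℕ) (q : ℂ) (ζ s : Fin 3 → ℂ) : ℂ :=
  ζ 0 ^ (2 * m - 2) * ζ 1 ^ (m - 1) * phiK m k q ζ s

/-! ### Auxiliary definitions -/

/-- Numerator of the `l`-th coefficient (including `(q^m)^l`). -/
noncomputable def nmf (m k : ℕ) (q u v : ℂ) (l : ℕ) : ℂ :=
  qp q (q ^ (k + 1) * (q ^ m)⁻¹) l * qp q (q * (q ^ m)⁻¹ * u / v) l * (q ^ m) ^ l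

/-- Denominator of the `l`-th coefficient. -/
noncomputable def dnf (k : ℕ) (q u v : ℂ) (l : ℕ) : ℂ :=
  qp q q l * qp q (q ^ (k + 1) * u / v) l

/-- The basic building sum. -/
noncomputable def SS (m k N : ℕ) (q u v z : ℂ) : ℂ :=
  ∑ l ∈ Finset.range (N + 1), nmf m k q u v l / dnf k q u v l * z ^ l

lemma qp_add (q a : ℂ) (s t : ℕ) : qp q a (s + t) = qp q a s * qp q (a * q ^ s) t := by
  unfold qp
  rw [Finset.prod_range_add]
  congr 1
  refine Finset.prod_congr rfl fun j _ => ?_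
  rw [pow_add]; ring

lemma nmf_succ (m k : ℕ) (q u v : ℂ) (n : ℕ) :
    nmf m k q u v (n + 1) = nmf m k q u v n *
      ((1 - q ^ (k + 1) * (q ^ m)⁻¹ * q ^ n) * ((1 - q * (q ^ m)⁻¹ * u / v * q ^ n) * q ^ m)) := by
  unfold nmf
  rw [qp_succ, qp_succ, pow_succ]; ring

lemma dnf_succ (k : ℕ) (q u v : ℂ) (n : ℕ) :
    dnf k q u v (n + 1) = dnf k q u v n *
      ((1 - q * q ^ n) * (1 - q ^ (k + 1) * u / v * q ^ n)) := by
  unfold dnf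
  rw [qp_succ, qp_succ]; ring

lemma keyhelper (q A B C u v : ℂ) (hq : q ≠ 0) (hA : A ≠ 0) (hB : B ≠ 0) (hC : C ≠ 0)
    (hu : u ≠ 0) (hv : v ≠ 0) :
    ((1 - A * (A * B * (q * C))⁻¹ * B) * ((1 - q * (A * B * (q * C))⁻¹ * u / v * B) * (A * B * (q * C)))) *
      ((1 - A * (A * B * (q * C))⁻¹ * C) * ((1 - q * (A * B * (q * C))⁻¹ * v / u * C) * (A * B * (q * C)))) =
    ((1 - q * B) * (1 - A * u / v * B)) * ((1 - q * C) * (1 - A * v / u * C)) := by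
  have E1 : (1 - A * (A * B * (q * C))⁻¹ * B) * (q * C) = -(1 - q * C) := by
    field_simp
    ring
  have E2 : (1 - q * (A * B * (q * C))⁻¹ * u / v * B) * (A * C * v) = -(u - A * C * v) := by
    field_simp
    ring
  have E3 : (1 - A * (A * B * (q * C))⁻¹ * C) * (q * B) = -(1 - q * B) := by
    field_simp
    ring
  have E4 : (1 - q * (A * B * (q * C))⁻¹ * v / u * C) * (A * B * u) = -(v - A * B * u) := by
    field_simp
    ring
  have E5 : (1 - A * u / v * B) * v = v - A * u * B := by
    field_simp
  have E6 : (1 - A * v / u * C) * u = u - A * v * C := by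
    field_simp
  have hD : q * C * (A * C * v) * (q * B) * (A * B * u) ≠ 0 := by
    apply_rules [mul_ne_zero]
  apply mul_right_cancel₀ hD
  calc ((1 - A * (A * B * (q * C))⁻¹ * B) * ((1 - q * (A * B * (q * C))⁻¹ * u / v * B) * (A * B * (q * C)))) *
      ((1 - A * (A * B * (q * C))⁻¹ * C) * ((1 - q * (A * B * (q * C))⁻¹ * v / u * C) * (A * B * (q * C)))) *
      (q * C * (A * C * v) * (q * B) * (A * B * u))
      = ((1 - A * (A * B * (q * C))⁻¹ * B) * (q * C)) *
        (((1 - q * (A * B * (q * C))⁻¹ * u / v * B) * (A * C * v)) *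
        (((1 - A * (A * B * (q * C))⁻¹ * C) * (q * B)) *
        (((1 - q * (A * B * (q * C))⁻¹ * v / u * C) * (A * B * u)) *
          (A * B * (q * C) * (A * B * (q * C)))))) := by ring
    _ = (-(1 - q * C)) * ((-(u - A * C * v)) * ((-(1 - q * B)) * ((-(v - A * B * u)) *
          (A * B * (q * C) * (A * B * (q * C)))))) := by rw [E1, E2, E3, E4]
    _ = ((1 - q * B) * (v - A * u * B)) * ((1 - q * C) * (u - A * v * C)) *
          (q * C * (A * C) * (q * B) * (A * B)) := by ring
    _ = ((1 - q * B) * ((1 - A * u / v * B) * v)) * ((1 - q * C) * ((1 - A * v / u * C) * u)) *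
          (q * C * (A * C) * (q * B) * (A * B)) := by rw [E5, E6]
    _ = ((1 - q * B) * (1 - A * u / v * B)) * ((1 - q * C) * (1 - A * v / u * C)) *
          (q * C * (A * C * v) * (q * B) * (A * B * u)) := by ring

lemma rev (m k N : ℕ) (hN : N + k + 1 = m) (q u v : ℂ) (hq : q ≠ 0) (hu : u ≠ 0) (hv : v ≠ 0)
    (hA : ∀ n, n < N → 1 - q * q ^ n ≠ 0) (hB : ∀ n, n < N → 1 - q ^ (k + 1) * u / v * q ^ n ≠ 0) :
    ∀ l, l ≤ N → nmf m k q u v (N - l) * (dnf k q u v N * dnf k q v u l)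
      = nmf m k q u v N * nmf m k q v u l * dnf k q u v (N - l) := by
  intro l
  induction l with
  | zero =>
    intro _
    have e1 : nmf m k q v u 0 = 1 := by simp [nmf, qp]
    have e2 : dnf k q v u 0 = 1 := by simp [dnf, qp]
    rw [Nat.sub_zero, e1, e2]; ring
  | succ l ih =>
    intro hl
    have hIH := ih (by omega)
    have h1 : N - l = (N - (l + 1)) + 1 := by omega
    set n := N - (l + 1) with hn
    rw [h1, nmf_succ, dnf_succ] at hIH
    rw [nmf_succ m k q v u l, dnf_succ k q v u l]
    have hqm : q ^ m = q ^ (k + 1) * q ^ n * (q * q ^ l) := by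
      rw [show m = k + 1 + n + (l + 1) from by omega]
      ring
    have key : ((1 - q ^ (k + 1) * (q ^ m)⁻¹ * q ^ n) * ((1 - q * (q ^ m)⁻¹ * u / v * q ^ n) * q ^ m)) *
        ((1 - q ^ (k + 1) * (q ^ m)⁻¹ * q ^ l) * ((1 - q * (q ^ m)⁻¹ * v / u * q ^ l) * q ^ m)) =
        ((1 - q * q ^ n) * (1 - q ^ (k + 1) * u / v * q ^ n)) *
          ((1 - q * q ^ l) * (1 - q ^ (k + 1) * v / u * q ^ l)) := by
      rw [hqm]
      exact keyhelper q (q ^ (k + 1)) (q ^ n) (q ^ l) u v hq (pow_ne_zero _ hq)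
        (pow_ne_zero _ hq) (pow_ne_zero _ hq) hu hv
    have hr2 : (1 - q * q ^ n) * (1 - q ^ (k + 1) * u / v * q ^ n) ≠ 0 :=
      mul_ne_zero (hA n (by omega)) (hB n (by omega))
    apply mul_right_cancel₀ hr2
    linear_combination
      ((1 - q ^ (k + 1) * (q ^ m)⁻¹ * q ^ l) * ((1 - q * (q ^ m)⁻¹ * v / u * q ^ l) * q ^ m)) * hIH
      - (nmf m k q u v n * dnf k q u v N * dnf k q v u l) * key

lemma keyhelper2 (q X D E u v : ℂ) (hq : q ≠ 0) (hX : X ≠ 0) (hD : D ≠ 0) (hE : E ≠ 0)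
    (hu : u ≠ 0) (hv : v ≠ 0) :
    (1 - X * (X * D * (q * E))⁻¹ * D) * (1 - q * (X * D * (q * E))⁻¹ * u / v * E) * (X * D * (q * E))
      = (1 - q * E) * (1 - X * v / u * D) * (u / v) := by
  have hc : q * E * (X * D * v) ≠ 0 := by apply_rules [mul_ne_zero]
  have E1 : (1 - X * (X * D * (q * E))⁻¹ * D) * (q * E) = -(1 - q * E) := by
    field_simp; ring
  have E2 : (1 - q * (X * D * (q * E))⁻¹ * u / v * E) * (X * D * v) = -(u - X * D * v) := by
    field_simp; ring
  have E5 : (1 - X * v / u * D) * u = u - X * v * D := by field_simp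
  have E6 : u / v * v = u := by field_simp
  apply mul_right_cancel₀ hc
  calc (1 - X * (X * D * (q * E))⁻¹ * D) * (1 - q * (X * D * (q * E))⁻¹ * u / v * E) *
        (X * D * (q * E)) * (q * E * (X * D * v))
      = ((1 - X * (X * D * (q * E))⁻¹ * D) * (q * E)) *
          (((1 - q * (X * D * (q * E))⁻¹ * u / v * E) * (X * D * v)) * (X * D * (q * E))) := by
        ring
    _ = (-(1 - q * E)) * ((-(u - X * D * v)) * (X * D * (q * E))) := by rw [E1, E2]
    _ = (1 - q * E) * (u - X * D * v) * (X * D * (q * E)) := by ring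
    _ = (1 - q * E) * ((1 - X * v / u * D) * u) * (X * D * (q * E)) := by rw [E5]; ring
    _ = (1 - q * E) * (1 - X * v / u * D) * (u / v * v) * (X * D * (q * E)) := by rw [E6]; ring
    _ = (1 - q * E) * (1 - X * v / u * D) * (u / v) * (q * E * (X * D * v)) := by ring

lemma nmf_eq (m k N : ℕ) (hN : N + k + 1 = m) (q u v : ℂ) (hq : q ≠ 0) (hu : u ≠ 0)
    (hv : v ≠ 0) :
    nmf m k q u v N = qp q q N * qp q (q ^ (k + 1) * v / u) N * (u / v) ^ N := by
  unfold nmf qp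
  rw [← Finset.prod_range_reflect (fun j => 1 - q ^ (k + 1) * (q ^ m)⁻¹ * q ^ j) N]
  rw [← Finset.prod_range_reflect (fun j => 1 - q ^ (k + 1) * v / u * q ^ j) N]
  rw [show ((q : ℂ) ^ m) ^ N = ∏ _j ∈ Finset.range N, q ^ m by
    rw [Finset.prod_const, Finset.card_range]]
  rw [show ((u / v : ℂ)) ^ N = ∏ _j ∈ Finset.range N, (u / v) by
    rw [Finset.prod_const, Finset.card_range]]
  rw [← Finset.prod_mul_distrib, ← Finset.prod_mul_distrib, ← Finset.prod_mul_distrib,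
    ← Finset.prod_mul_distrib]
  refine Finset.prod_congr rfl fun j hj => ?_
  rw [Finset.mem_range] at hj
  have hqm : q ^ m = q ^ (k + 1) * q ^ (N - 1 - j) * (q * q ^ j) := by
    rw [show m = k + 1 + (N - 1 - j) + (j + 1) from by omega]
    ring
  rw [hqm]
  exact keyhelper2 q (q ^ (k + 1)) (q ^ (N - 1 - j)) (q ^ j) u v hq (pow_ne_zero _ hq)
    (pow_ne_zero _ hq) (pow_ne_zero _ hq) hu hv

lemma scalarW (m k N : ℕ) (hN : N + k + 1 = m) (q u v : ℂ) (hq : q ≠ 0) (hu : u ≠ 0) (hv : v ≠ 0)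
    (hx : ∀ l, 1 ≤ l → l ≤ m - 1 → v - q ^ l * u ≠ 0)
    (hqq : qp q q N ≠ 0) (hcu : qp q (q * u / v) k ≠ 0)
    (hcuN : qp q (q ^ (k + 1) * u / v) N ≠ 0) :
    ∏ l ∈ Finset.Icc 1 (m - 1), (u - q ^ l * v) / (v - q ^ l * u)
      = (u / v) ^ k * qp q (q * v / u) k / qp q (q * u / v) k *
        (nmf m k q u v N / dnf k q u v N) := by
  have hm1 : m - 1 = k + N := by omega
  rw [show Finset.Icc 1 (m - 1) = Finset.Ico 1 (m - 1 + 1) from rfl,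
    Finset.prod_Ico_eq_prod_range]
  simp only [Nat.add_sub_cancel]
  have step2 : ∀ j ∈ Finset.range (m - 1),
      (u - q ^ (1 + j) * v) / (v - q ^ (1 + j) * u)
        = u / v * (1 - q * v / u * q ^ j) / (1 - q * u / v * q ^ j) := by
    intro j hj
    rw [Finset.mem_range] at hj
    have hd1 : v - q ^ (1 + j) * u ≠ 0 := hx (1 + j) (by omega) (by omega)
    have e : v - q ^ (1 + j) * u = v * (1 - q * u / v * q ^ j) := by
      field_simp; ring
    have hd2 : 1 - q * u / v * q ^ j ≠ 0 := by
      intro h0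
      exact hd1 (by rw [e, h0, mul_zero])
    rw [div_eq_div_iff hd1 hd2]
    field_simp
    ring
  rw [Finset.prod_congr rfl step2]
  rw [show (fun j => u / v * (1 - q * v / u * q ^ j) / (1 - q * u / v * q ^ j)) = fun j =>
    (u / v * (1 - q * v / u * q ^ j)) / (1 - q * u / v * q ^ j) from rfl]
  rw [Finset.prod_div_distrib, Finset.prod_mul_distrib, Finset.prod_const, Finset.card_range]
  have e1 : ∏ j ∈ Finset.range (m - 1), (1 - q * v / u * q ^ j) = qp q (q * v / u) (m - 1) := rfl
  have e2 : ∏ j ∈ Finset.range (m - 1), (1 - q * u / v * q ^ j) = qp q (q * u / v) (m - 1) := rfl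
  rw [e1, e2, hm1, qp_add, qp_add]
  have e3 : q * v / u * q ^ k = q ^ (k + 1) * v / u := by rw [pow_succ]; ring
  have e4 : q * u / v * q ^ k = q ^ (k + 1) * u / v := by rw [pow_succ]; ring
  rw [e3, e4, nmf_eq m k N hN q u v hq hu hv]
  unfold dnf
  field_simp
  ring

lemma Srev (m k N : ℕ) (hN : N + k + 1 = m) (q u v w : ℂ) (hq : q ≠ 0) (hu : u ≠ 0)
    (hv : v ≠ 0) (hw : w ≠ 0)
    (hA : ∀ n, n < N → 1 - q * q ^ n ≠ 0) (hB : ∀ n, n < N → 1 - q ^ (k + 1) * u / v * q ^ n ≠ 0)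
    (hdn : ∀ l, l ≤ N → dnf k q u v l ≠ 0) (hdn' : ∀ l, l ≤ N → dnf k q v u l ≠ 0) :
    nmf m k q u v N / dnf k q u v N * SS m k N q v u w = w ^ N * SS m k N q u v w⁻¹ := by
  unfold SS
  rw [Finset.mul_sum, Finset.mul_sum]
  rw [← Finset.sum_range_reflect (fun l => w ^ N * (nmf m k q u v l / dnf k q u v l * (w⁻¹) ^ l))
    (N + 1)]
  refine Finset.sum_congr rfl fun l hl => ?_
  rw [Finset.mem_range] at hl
  simp only [Nat.add_sub_cancel]
  have hww : w ^ N * (w⁻¹) ^ (N - l) = w ^ l := by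
    rw [inv_pow, ← pow_sub₀ w hw (by omega : N - l ≤ N)]
    congr 1
    omega
  have hdiveq : nmf m k q u v N / dnf k q u v N * (nmf m k q v u l / dnf k q v u l)
      = nmf m k q u v (N - l) / dnf k q u v (N - l) := by
    rw [div_mul_div_comm, div_eq_div_iff (mul_ne_zero (hdn N le_rfl) (hdn' l (by omega)))
      (hdn (N - l) (by omega))]
    linear_combination -rev m k N hN q u v hq hu hv hA hB l (by omega)
  linear_combination w ^ l * hdiveq - (nmf m k q u v (N - l) / dnf k q u v (N - l)) * hww

lemma phiK_eval (m k N : ℕ) (hmk : m - k = N + 1) (q : ℂ) (ζ s : Fin 3 → ℂ) :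
    phiK m k q ζ s = (ζ 2 / ζ 0) ^ k * (q * s 0 / s 2) ^ k *
      (qp q (q * (q ^ m)⁻¹) k ^ 2 * qp q (q ^ m) k ^ 2 /
        (qp q q k * qp q (q * s 0 / s 1) k * qp q (q * s 1 / s 2) k * qp q (q * s 0 / s 2) k)) *
      (SS m k N q (s 0) (s 1) (ζ 1 / ζ 0) *
        (SS m k N q (s 0) (s 2) (ζ 2 / ζ 0) * SS m k N q (s 1) (s 2) (ζ 2 / ζ 1))) := by
  unfold phiK
  rw [show (Finset.univ.filter (fun p : Fin 3 × Fin 3 => p.1 < p.2)) =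
    {((0 : Fin 3), (1 : Fin 3)), (0, 2), (1, 2)} from by decide]
  rw [Finset.prod_insert (by decide), Finset.prod_insert (by decide), Finset.prod_singleton]
  have conv : ∀ (i j : Fin 3), (∑ l ∈ Finset.range (m - k),
      qp q (q ^ (k + 1) * (q ^ m)⁻¹) l * qp q (q * (q ^ m)⁻¹ * s i / s j) l /
        (qp q q l * qp q (q ^ (k + 1) * s i / s j) l) * (q ^ m) ^ l * (ζ j / ζ i) ^ l)
      = SS m k N q (s i) (s j) (ζ j / ζ i) := by
    intro i j
    rw [hmk]
    unfold SS nmf dnf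
    refine Finset.sum_congr rfl fun l _ => ?_
    ring
  rw [show ((0 : Fin 3), (1 : Fin 3)).1 = 0 from rfl]
  simp only []
  rw [conv 0 1, conv 0 2, conv 1 2]

set_option maxHeartbeats 2000000 in
/-- `Q = ζ₁^{2m−2} ζ₂^{m−1} φ_k` is a polynomial in `ζ₁, ζ₂, ζ₃` and is
invariant under the deformed Weyl group action `π_m(σ_i)`, `i = 1, 2`. -/
theorem statement5 (m k : ℕ) (hm : 1 ≤ m) (hk : k ≤ m - 1) (q : ℂ) (hq : q ≠ 0)
    (ζ s : Fin 3 → ℂ) (hζ : ∀ i, ζ i ≠ 0) (hs : ∀ i, s i ≠ 0)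
    (h1 : ∀ l : ℕ, l ≤ m - 1 → qp q q l ≠ 0)
    (h2 : ∀ i j : Fin 3, i ≠ j → ∀ a : ℕ, 1 ≤ a → a ≤ k + 1 →
      ∀ l : ℕ, l ≤ m - 1 → qp q (q ^ a * s i / s j) l ≠ 0)
    (h3 : ∀ i j : Fin 3, i ≠ j → ∀ l : ℕ, 1 ≤ l → l ≤ m - 1 → s i - q ^ l * s j ≠ 0) :
    (∃ P : MvPolynomial (Fin 3) ℂ, ∀ z : Fin 3 → ℂ, (∀ i, z i ≠ 0) →
        MvPolynomial.eval z P = Qfun m k q z s) ∧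
      ((∏ l ∈ Finset.Icc 1 (m - 1), (s 0 - q ^ l * s 1) / (s 1 - q ^ l * s 0)) *
          Qfun m k q (ζ ∘ Equiv.swap 0 1) (s ∘ Equiv.swap 0 1)
        = Qfun m k q ζ s) ∧
      ((∏ l ∈ Finset.Icc 1 (m - 1), (s 1 - q ^ l * s 2) / (s 2 - q ^ l * s 1)) *
          Qfun m k q (ζ ∘ Equiv.swap 1 2) (s ∘ Equiv.swap 1 2)
        = Qfun m k q ζ s) := by
  have hN : (m - 1 - k) + k + 1 = m := by omega
  set N := m - 1 - k with hNdef
  have hmk : m - k = N + 1 := by omega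
  have h2' : ∀ i j : Fin 3, i ≠ j → qp q (q * s i / s j) k ≠ 0 := by
    intro i j hij
    have h := h2 i j hij 1 le_rfl (by omega) k hk
    rwa [pow_one] at h
  have hqqk : qp q q k ≠ 0 := h1 k hk
  have hqqN : qp q q N ≠ 0 := h1 N (by omega)
  have hkN : ∀ i j : Fin 3, i ≠ j → qp q (q ^ (k + 1) * s i / s j) N ≠ 0 := fun i j hij =>
    h2 i j hij (k + 1) (by omega) le_rfl N (by omega)
  have hdnS : ∀ i j : Fin 3, i ≠ j → ∀ l, l ≤ N → dnf k q (s i) (s j) l ≠ 0 := by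
    intro i j hij l hl
    exact mul_ne_zero (h1 l (by omega)) (h2 i j hij (k + 1) (by omega) le_rfl l (by omega))
  have hAq : ∀ n, n < N → 1 - q * q ^ n ≠ 0 := by
    intro n hn
    have hqq := h1 N (by omega)
    unfold qp at hqq
    exact Finset.prod_ne_zero_iff.mp hqq n (Finset.mem_range.mpr hn)
  have hBq : ∀ i j : Fin 3, i ≠ j → ∀ n, n < N → 1 - q ^ (k + 1) * s i / s j * q ^ n ≠ 0 := by
    intro i j hij n hn
    have h := hkN i j hij
    unfold qp at h
    exact Finset.prod_ne_zero_iff.mp h n (Finset.mem_range.mpr hn)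
  refine ⟨?_, ?_, ?_⟩
  · -- polynomiality
    refine ⟨MvPolynomial.C ((q * s 0 / s 2) ^ k *
        (qp q (q * (q ^ m)⁻¹) k ^ 2 * qp q (q ^ m) k ^ 2 /
          (qp q q k * qp q (q * s 0 / s 1) k * qp q (q * s 1 / s 2) k * qp q (q * s 0 / s 2) k))) *
        (MvPolynomial.X 0 ^ k * MvPolynomial.X 1 ^ k) *
        ((∑ a ∈ Finset.range (N + 1), MvPolynomial.C (nmf m k q (s 0) (s 1) a / dnf k q (s 0) (s 1) a) *
            (MvPolynomial.X 1 ^ a * MvPolynomial.X 0 ^ (N - a))) *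
         ((∑ b ∈ Finset.range (N + 1), MvPolynomial.C (nmf m k q (s 0) (s 2) b / dnf k q (s 0) (s 2) b) *
            (MvPolynomial.X 2 ^ (k + b) * MvPolynomial.X 0 ^ (N - b))) *
          (∑ c ∈ Finset.range (N + 1), MvPolynomial.C (nmf m k q (s 1) (s 2) c / dnf k q (s 1) (s 2) c) *
            (MvPolynomial.X 2 ^ c * MvPolynomial.X 1 ^ (N - c))))), ?_⟩
    intro z hz
    simp only [map_mul, map_sum, map_pow, MvPolynomial.eval_C, MvPolynomial.eval_X]
    have E1 : ∑ a ∈ Finset.range (N + 1),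
        nmf m k q (s 0) (s 1) a / dnf k q (s 0) (s 1) a * (z 1 ^ a * z 0 ^ (N - a))
        = z 0 ^ N * SS m k N q (s 0) (s 1) (z 1 / z 0) := by
      unfold SS
      rw [Finset.mul_sum]
      refine Finset.sum_congr rfl fun a ha => ?_
      rw [Finset.mem_range] at ha
      rw [div_pow, pow_sub₀ (z 0) (hz 0) (by omega : a ≤ N)]
      ring
    have E2 : ∑ b ∈ Finset.range (N + 1),
        nmf m k q (s 0) (s 2) b / dnf k q (s 0) (s 2) b * (z 2 ^ (k + b) * z 0 ^ (N - b))
        = z 0 ^ (N + k) * ((z 2 / z 0) ^ k * SS m k N q (s 0) (s 2) (z 2 / z 0)) := by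
      unfold SS
      rw [Finset.mul_sum, Finset.mul_sum]
      refine Finset.sum_congr rfl fun b hb => ?_
      rw [Finset.mem_range] at hb
      have hsub : z 0 ^ (N - b) = z 0 ^ (N + k) * (z 0 ^ (k + b))⁻¹ := by
        rw [← pow_sub₀ (z 0) (hz 0) (by omega : k + b ≤ N + k)]
        congr 1
        omega
      rw [div_pow, div_pow, hsub, pow_add, pow_add]
      ring
    have E3 : ∑ c ∈ Finset.range (N + 1),
        nmf m k q (s 1) (s 2) c / dnf k q (s 1) (s 2) c * (z 2 ^ c * z 1 ^ (N - c))
        = z 1 ^ N * SS m k N q (s 1) (s 2) (z 2 / z 1) := by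
      unfold SS
      rw [Finset.mul_sum]
      refine Finset.sum_congr rfl fun c hc => ?_
      rw [Finset.mem_range] at hc
      rw [div_pow, pow_sub₀ (z 1) (hz 1) (by omega : c ≤ N)]
      ring
    rw [E1, E2, E3]
    simp only [Qfun]
    rw [phiK_eval m k N hmk q z s]
    have hz0e : z 0 ^ (2 * m - 2) = z 0 ^ N * z 0 ^ (N + k) * z 0 ^ k := by
      rw [← pow_add, ← pow_add]
      congr 1
      omega
    have hz1e : z 1 ^ (m - 1) = z 1 ^ k * z 1 ^ N := by
      rw [← pow_add]
      congr 1
      omega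
    rw [hz0e, hz1e]
    ring
  · -- swap 0 1
    have sa : Equiv.swap (0 : Fin 3) 1 0 = 1 := Equiv.swap_apply_left 0 1
    have sb : Equiv.swap (0 : Fin 3) 1 1 = 0 := Equiv.swap_apply_right 0 1
    have sc : Equiv.swap (0 : Fin 3) 1 2 = 2 :=
      Equiv.swap_apply_of_ne_of_ne (by decide) (by decide)
    simp only [Qfun, phiK_eval m k N hmk q, Function.comp_apply, sa, sb, sc]
    have key2 := Srev m k N hN q (s 0) (s 1) (ζ 0 / ζ 1) hq (hs 0) (hs 1)
      (div_ne_zero (hζ 0) (hζ 1)) hAq (hBq 0 1 (by decide)) (hdnS 0 1 (by decide))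
      (hdnS 1 0 (by decide))
    rw [show ((ζ 0 / ζ 1)⁻¹ : ℂ) = ζ 1 / ζ 0 from inv_div _ _] at key2
    have R2 := scalarW m k N hN q (s 0) (s 1) hq (hs 0) (hs 1)
      (fun l hl1 hl2 => h3 1 0 (by decide) l hl1 hl2) hqqN (h2' 0 1 (by decide))
      (hkN 0 1 (by decide))
    rw [R2]
    have hsc : (ζ 0 / ζ 1) ^ N * ((s 0 / s 1) ^ k * qp q (q * s 1 / s 0) k / qp q (q * s 0 / s 1) k *
        (ζ 1 ^ (2 * m - 2) * ζ 0 ^ (m - 1) * ((ζ 2 / ζ 1) ^ k * (q * s 1 / s 2) ^ k *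
          (qp q (q * (q ^ m)⁻¹) k ^ 2 * qp q (q ^ m) k ^ 2 /
            (qp q q k * qp q (q * s 1 / s 0) k * qp q (q * s 0 / s 2) k * qp q (q * s 1 / s 2) k))))) =
        ζ 0 ^ (2 * m - 2) * ζ 1 ^ (m - 1) * ((ζ 2 / ζ 0) ^ k * (q * s 0 / s 2) ^ k *
          (qp q (q * (q ^ m)⁻¹) k ^ 2 * qp q (q ^ m) k ^ 2 /
            (qp q q k * qp q (q * s 0 / s 1) k * qp q (q * s 1 / s 2) k * qp q (q * s 0 / s 2) k))) := by
      have hζ0e : ζ 0 ^ (2 * m - 2) = ζ 0 ^ (m - 1) * (ζ 0 ^ k * ζ 0 ^ N) := by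
        rw [← pow_add, ← pow_add]
        congr 1
        omega
      have hζ1e : ζ 1 ^ (2 * m - 2) = ζ 1 ^ (m - 1) * (ζ 1 ^ k * ζ 1 ^ N) := by
        rw [← pow_add, ← pow_add]
        congr 1
        omega
      rw [hζ0e, hζ1e]
      have ha := h2' 1 0 (by decide)
      have hb := h2' 0 1 (by decide)
      have hc := h2' 0 2 (by decide)
      have hd := h2' 1 2 (by decide)
      have hz0 := hζ 0
      have hz1 := hζ 1
      have hz2 := hζ 2
      have hs0 := hs 0
      have hs1 := hs 1
      have hs2 := hs 2
      set Qf := qp q (q * (q ^ m)⁻¹) k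
      set Qg := qp q (q ^ m) k
      set Qa := qp q (q * s 1 / s 0) k
      set Qb := qp q (q * s 0 / s 1) k
      set Qc := qp q (q * s 0 / s 2) k
      set Qd := qp q (q * s 1 / s 2) k
      have d1 : ζ 1 ^ N * (ζ 1)⁻¹ ^ N = 1 := by
        rw [← mul_pow, mul_inv_cancel₀ hz1, one_pow]
      have d2 : ζ 1 ^ k * (ζ 1)⁻¹ ^ k = 1 := by
        rw [← mul_pow, mul_inv_cancel₀ hz1, one_pow]
      have d4 : s 1 ^ k * (s 1)⁻¹ ^ k = 1 := by
        rw [← mul_pow, mul_inv_cancel₀ hs1, one_pow]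
      have d5 : ζ 0 ^ k * (ζ 0)⁻¹ ^ k = 1 := by
        rw [← mul_pow, mul_inv_cancel₀ hz0, one_pow]
      have dQa : Qa * Qa⁻¹ = 1 := mul_inv_cancel₀ ha
      linear_combination
        (ζ 0 ^ N * ζ 0 ^ (m - 1) * ζ 1 ^ (m - 1) * ζ 2 ^ k * q ^ k * s 0 ^ k * (s 2)⁻¹ ^ k *
            Qf ^ 2 * Qg ^ 2 * (qp q q k)⁻¹ * Qb⁻¹ * Qc⁻¹ * Qd⁻¹ *
            ((Qa * Qa⁻¹) * (ζ 1 ^ N * (ζ 1)⁻¹ ^ N) * (ζ 1 ^ k * (ζ 1)⁻¹ ^ k))) * d4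
        + (ζ 0 ^ N * ζ 0 ^ (m - 1) * ζ 1 ^ (m - 1) * ζ 2 ^ k * q ^ k * s 0 ^ k * (s 2)⁻¹ ^ k *
            Qf ^ 2 * Qg ^ 2 * (qp q q k)⁻¹ * Qb⁻¹ * Qc⁻¹ * Qd⁻¹ *
            ((Qa * Qa⁻¹) * (ζ 1 ^ N * (ζ 1)⁻¹ ^ N))) * d2
        + (ζ 0 ^ N * ζ 0 ^ (m - 1) * ζ 1 ^ (m - 1) * ζ 2 ^ k * q ^ k * s 0 ^ k * (s 2)⁻¹ ^ k *
            Qf ^ 2 * Qg ^ 2 * (qp q q k)⁻¹ * Qb⁻¹ * Qc⁻¹ * Qd⁻¹ * (Qa * Qa⁻¹)) * d1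
        + (ζ 0 ^ N * ζ 0 ^ (m - 1) * ζ 1 ^ (m - 1) * ζ 2 ^ k * q ^ k * s 0 ^ k * (s 2)⁻¹ ^ k *
            Qf ^ 2 * Qg ^ 2 * (qp q q k)⁻¹ * Qb⁻¹ * Qc⁻¹ * Qd⁻¹) * dQa
        - (ζ 0 ^ N * ζ 0 ^ (m - 1) * ζ 1 ^ (m - 1) * ζ 2 ^ k * q ^ k * s 0 ^ k * (s 2)⁻¹ ^ k *
            Qf ^ 2 * Qg ^ 2 * (qp q q k)⁻¹ * Qb⁻¹ * Qc⁻¹ * Qd⁻¹) * d5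
    linear_combination ((s 0 / s 1) ^ k * qp q (q * s 1 / s 0) k / qp q (q * s 0 / s 1) k *
        (ζ 1 ^ (2 * m - 2) * ζ 0 ^ (m - 1) * ((ζ 2 / ζ 1) ^ k * (q * s 1 / s 2) ^ k *
          (qp q (q * (q ^ m)⁻¹) k ^ 2 * qp q (q ^ m) k ^ 2 /
            (qp q q k * qp q (q * s 1 / s 0) k * qp q (q * s 0 / s 2) k * qp q (q * s 1 / s 2) k)) *
          (SS m k N q (s 1) (s 2) (ζ 2 / ζ 1) * SS m k N q (s 0) (s 2) (ζ 2 / ζ 0))))) * key2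
      + (SS m k N q (s 0) (s 1) (ζ 1 / ζ 0) *
          (SS m k N q (s 0) (s 2) (ζ 2 / ζ 0) * SS m k N q (s 1) (s 2) (ζ 2 / ζ 1))) * hsc
  · -- swap 1 2
    have sa : Equiv.swap (1 : Fin 3) 2 0 = 0 :=
      Equiv.swap_apply_of_ne_of_ne (by decide) (by decide)
    have sb : Equiv.swap (1 : Fin 3) 2 1 = 2 := Equiv.swap_apply_left 1 2
    have sc : Equiv.swap (1 : Fin 3) 2 2 = 1 := Equiv.swap_apply_right 1 2
    simp only [Qfun, phiK_eval m k N hmk q, Function.comp_apply, sa, sb, sc]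
    have key2 := Srev m k N hN q (s 1) (s 2) (ζ 1 / ζ 2) hq (hs 1) (hs 2)
      (div_ne_zero (hζ 1) (hζ 2)) hAq (hBq 1 2 (by decide)) (hdnS 1 2 (by decide))
      (hdnS 2 1 (by decide))
    rw [show ((ζ 1 / ζ 2)⁻¹ : ℂ) = ζ 2 / ζ 1 from inv_div _ _] at key2
    have R2 := scalarW m k N hN q (s 1) (s 2) hq (hs 1) (hs 2)
      (fun l hl1 hl2 => h3 2 1 (by decide) l hl1 hl2) hqqN (h2' 1 2 (by decide))
      (hkN 1 2 (by decide))
    rw [R2]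
    have hsc : (ζ 1 / ζ 2) ^ N * ((s 1 / s 2) ^ k * qp q (q * s 2 / s 1) k / qp q (q * s 1 / s 2) k *
        (ζ 0 ^ (2 * m - 2) * ζ 2 ^ (m - 1) * ((ζ 1 / ζ 0) ^ k * (q * s 0 / s 1) ^ k *
          (qp q (q * (q ^ m)⁻¹) k ^ 2 * qp q (q ^ m) k ^ 2 /
            (qp q q k * qp q (q * s 0 / s 2) k * qp q (q * s 2 / s 1) k * qp q (q * s 0 / s 1) k))))) =
        ζ 0 ^ (2 * m - 2) * ζ 1 ^ (m - 1) * ((ζ 2 / ζ 0) ^ k * (q * s 0 / s 2) ^ k *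
          (qp q (q * (q ^ m)⁻¹) k ^ 2 * qp q (q ^ m) k ^ 2 /
            (qp q q k * qp q (q * s 0 / s 1) k * qp q (q * s 1 / s 2) k * qp q (q * s 0 / s 2) k))) := by
      have hζ2e : ζ 2 ^ (m - 1) = ζ 2 ^ k * ζ 2 ^ N := by
        rw [← pow_add]
        congr 1
        omega
      have hζ1e : ζ 1 ^ (m - 1) = ζ 1 ^ k * ζ 1 ^ N := by
        rw [← pow_add]
        congr 1
        omega
      rw [hζ2e, hζ1e]
      have ha := h2' 2 1 (by decide)
      have hb := h2' 1 2 (by decide)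
      have hc := h2' 0 2 (by decide)
      have hd := h2' 0 1 (by decide)
      have hz0 := hζ 0
      have hz1 := hζ 1
      have hz2 := hζ 2
      have hs0 := hs 0
      have hs1 := hs 1
      have hs2 := hs 2
      set Qf := qp q (q * (q ^ m)⁻¹) k
      set Qg := qp q (q ^ m) k
      set Qa := qp q (q * s 2 / s 1) k
      set Qb := qp q (q * s 1 / s 2) k
      set Qc := qp q (q * s 0 / s 2) k
      set Qd := qp q (q * s 0 / s 1) k
      have d2 : ζ 2 ^ N * (ζ 2)⁻¹ ^ N = 1 := by
        rw [← mul_pow, mul_inv_cancel₀ hz2, one_pow]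
      have d4 : s 1 ^ k * (s 1)⁻¹ ^ k = 1 := by
        rw [← mul_pow, mul_inv_cancel₀ hs1, one_pow]
      have dQa : Qa * Qa⁻¹ = 1 := mul_inv_cancel₀ ha
      linear_combination
        (ζ 0 ^ (2 * m - 2) * ζ 1 ^ N * ζ 1 ^ k * ζ 2 ^ k * (ζ 0)⁻¹ ^ k * q ^ k * s 0 ^ k *
            (s 2)⁻¹ ^ k * Qf ^ 2 * Qg ^ 2 * (qp q q k)⁻¹ * Qb⁻¹ * Qc⁻¹ * Qd⁻¹ *
            ((Qa * Qa⁻¹) * (ζ 2 ^ N * (ζ 2)⁻¹ ^ N))) * d4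
        + (ζ 0 ^ (2 * m - 2) * ζ 1 ^ N * ζ 1 ^ k * ζ 2 ^ k * (ζ 0)⁻¹ ^ k * q ^ k * s 0 ^ k *
            (s 2)⁻¹ ^ k * Qf ^ 2 * Qg ^ 2 * (qp q q k)⁻¹ * Qb⁻¹ * Qc⁻¹ * Qd⁻¹ *
            (Qa * Qa⁻¹)) * d2
        + (ζ 0 ^ (2 * m - 2) * ζ 1 ^ N * ζ 1 ^ k * ζ 2 ^ k * (ζ 0)⁻¹ ^ k * q ^ k * s 0 ^ k *
            (s 2)⁻¹ ^ k * Qf ^ 2 * Qg ^ 2 * (qp q q k)⁻¹ * Qb⁻¹ * Qc⁻¹ * Qd⁻¹) * dQa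
    linear_combination ((s 1 / s 2) ^ k * qp q (q * s 2 / s 1) k / qp q (q * s 1 / s 2) k *
        (ζ 0 ^ (2 * m - 2) * ζ 2 ^ (m - 1) * ((ζ 1 / ζ 0) ^ k * (q * s 0 / s 1) ^ k *
          (qp q (q * (q ^ m)⁻¹) k ^ 2 * qp q (q ^ m) k ^ 2 /
            (qp q q k * qp q (q * s 0 / s 2) k * qp q (q * s 2 / s 1) k * qp q (q * s 0 / s 1) k)) *
          (SS m k N q (s 0) (s 2) (ζ 2 / ζ 0) * SS m k N q (s 0) (s 1) (ζ 1 / ζ 0))))) * key2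
      + (SS m k N q (s 0) (s 1) (ζ 1 / ζ 0) *
          (SS m k N q (s 0) (s 2) (ζ 2 / ζ 0) * SS m k N q (s 1) (s 2) (ζ 2 / ζ 1))) * hsc
end

section
/- Let n ≥ 2 and let q, t be nonzero complex numbers with |q| < 1. Let ζ₁, …, ζ_n be nonzero complex numbers such that for all i ≠ j: ζ_i ≠ ζ_j, ζ_i ≠ q^{±1}ζ_j, and t ζ_j/ζ_i ∉ {q^{−l} : l ∈ ℤ, l ≥ −1} (so all products and denominators below are defined and nonzero). Define G(ζ₁,…,ζ_n) = ∏_{1≤i<j≤n} (1 − ζ_j/ζ_i) ∏_{l=0}^∞ (1 − q^{l+1} t^{−1} ζ_j/ζ_i)/(1 − q^l t ζ_j/ζ_i). Then Σ_{i=1}^n t^{i−1} ∏_{j<i} [(1 − q^{−1} t ζ_i/ζ_j)/(1 − q^{−1} ζ_i/ζ_j)] · ∏_{j>i} [(1 − q t^{−1} ζ_j/ζ_i)/(1 − q ζ_j/ζ_i)] · G(ζ₁, …, q^{−1}ζ_i, …, ζ_n) = (1 + t + ⋯ + t^{n−1}) · G(ζ₁, …, ζ_n). (That is, the infinite product G is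 an eigenfunction of the Macdonald-type difference operator D with parameters (s₁,…,s_n) = (1, t, …, t^{n−1}), with eigenvalue 1 + t + ⋯ + t^{n−1}.) -/
open Filter Topology Finset Polynomial

/-! ### Auxiliary infinite-product machinery -/

noncomputable def gseq (q u v : ℂ) (l : ℕ) : ℂ := (1 - q ^ l * u) / (1 - q ^ l * v)

lemma hasProd_zero_of_eq_zero {f : ℕ → ℂ} (h : ∃ i, f i = 0) : HasProd f 0 := by
  obtain ⟨i, hi⟩ := h
  have : ∀ᶠ s in (atTop : Filter (Finset ℕ)), ∏ j ∈ s, f j = 0 := by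
    filter_upwards [Filter.eventually_ge_atTop {i}] with s hs
    exact Finset.prod_eq_zero (hs (Finset.mem_singleton_self i)) hi
  exact Tendsto.congr' (by filter_upwards [this] with s hs using hs.symm) tendsto_const_nhds

lemma gseq_multipliable {q : ℂ} (hq1 : ‖q‖ < 1) (u v : ℂ)
    (hv : ∀ l : ℕ, q ^ l * v ≠ 1) : Multipliable (gseq q u v) := by
  by_cases hz : ∃ l, (1 : ℂ) - q ^ l * u = 0
  · obtain ⟨l, hl⟩ := hz
    exact ⟨0, hasProd_zero_of_eq_zero ⟨l, by simp [gseq, hl]⟩⟩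
  push_neg at hz
  set d : ℕ → ℂ := fun l => q ^ l * (v - u) / (1 - q ^ l * v) with hd
  have hveq : ∀ l, gseq q u v l = 1 + d l := by
    intro l
    have h1 : (1 : ℂ) - q ^ l * v ≠ 0 := sub_ne_zero.mpr fun h => hv l h.symm
    simp only [gseq, hd]; rw [div_eq_iff h1, add_mul, div_mul_cancel₀ _ h1]; ring
  have htends : Tendsto (fun l : ℕ => q ^ l * v) atTop (𝓝 0) := by
    simpa using (tendsto_pow_atTop_nhds_zero_of_norm_lt_one (by simpa using hq1)).mul_const v
  have hev : ∀ᶠ l in atTop, ‖q ^ l * v‖ < 1/2 := by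
    have := htends.norm
    simp only [norm_zero] at this
    exact this.eventually_lt_const (by norm_num)
  have hsum : Summable d := by
    apply Summable.of_norm_bounded_eventually_nat (g := fun l => (2 * ‖v - u‖) * ‖q‖ ^ l)
    · exact (summable_geometric_of_lt_one (norm_nonneg q) (by simpa using hq1)).mul_left _
    · filter_upwards [hev] with l hl
      have h2 : (1:ℝ)/2 ≤ ‖(1:ℂ) - q ^ l * v‖ := by
        have := norm_sub_norm_le (1 : ℂ) (q ^ l * v)
        simp only [norm_one] at this
        linarith
      have h3 : ‖(1:ℂ) - q ^ l * v‖ ≠ 0 := by positivity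
      rw [hd]
      rw [norm_div, norm_mul, norm_pow]
      rw [div_le_iff₀ (by positivity)]
      nlinarith [mul_le_mul_of_nonneg_left h2 (by positivity : (0:ℝ) ≤ 2 * ‖v - u‖ * ‖q‖ ^ l)]
  have hlog : Summable fun l => Complex.log (gseq q u v l) := by
    have hev2 : ∀ᶠ l in atTop, ‖d l‖ ≤ 1/2 := by
      have h0 : Tendsto d atTop (𝓝 0) := hsum.tendsto_atTop_zero
      have := h0.norm
      simp only [norm_zero] at this
      filter_upwards [this.eventually_le_const (by norm_num : (0:ℝ) < 1/2)] with l hl using hl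
    apply Summable.of_norm_bounded_eventually_nat (g := fun l => 3/2 * ‖d l‖)
    · exact hsum.norm.mul_left _
    · filter_upwards [hev2] with l hl
      rw [hveq l]
      exact Complex.norm_log_one_add_half_le_self hl
  exact Complex.multipliable_of_summable_log hlog

lemma gseq_succ (q u v : ℂ) (l : ℕ) : gseq q u v (l+1) = gseq q (q*u) (q*v) l := by
  simp only [gseq, pow_succ']
  ring_nf

lemma gseq_shift {q : ℂ} (hq1 : ‖q‖ < 1) (u v : ℂ)
    (hv : ∀ l : ℕ, q ^ l * v ≠ 1) :
    (∏' l, gseq q u v l) = (1 - u) / (1 - v) * ∏' l, gseq q (q*u) (q*v) l := by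
  have hv' : ∀ l : ℕ, q ^ l * (q * v) ≠ 1 := by
    intro l
    have := hv (l+1)
    rw [pow_succ'] at this
    intro h; exact this (by rw [← h]; ring)
  have m1 := gseq_multipliable hq1 u v hv
  have m2 := gseq_multipliable hq1 (q*u) (q*v) hv'
  have h1 : Tendsto (fun N => ∏ l ∈ Finset.range N, gseq q u v l) atTop (𝓝 (∏' l, gseq q u v l)) :=
    m1.hasProd.tendsto_prod_nat
  have h2 : Tendsto (fun N => ∏ l ∈ Finset.range N, gseq q (q*u) (q*v) l) atTop
      (𝓝 (∏' l, gseq q (q*u) (q*v) l)) := m2.hasProd.tendsto_prod_nat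
  have key : ∀ N, ∏ l ∈ Finset.range (N+1), gseq q u v l
      = (∏ l ∈ Finset.range N, gseq q (q*u) (q*v) l) * gseq q u v 0 := by
    intro N
    rw [Finset.prod_range_succ']
    congr 1
    exact Finset.prod_congr rfl fun l _ => gseq_succ q u v l
  have h3 : Tendsto (fun N => ∏ l ∈ Finset.range (N+1), gseq q u v l) atTop
      (𝓝 (∏' l, gseq q u v l)) := h1.comp (tendsto_add_atTop_nat 1)
  have h4 : Tendsto (fun N => ∏ l ∈ Finset.range (N+1), gseq q u v l) atTop
      (𝓝 ((∏' l, gseq q (q*u) (q*v) l) * gseq q u v 0)) := by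
    simp only [key]
    exact h2.mul_const _
  have h5 := tendsto_nhds_unique h3 h4
  rw [h5]
  have h6 : gseq q u v 0 = (1-u)/(1-v) := by simp [gseq]
  rw [h6]; ring

/-- `A(x) = ∏_{l≥0} (1 - q^{l+1} t⁻¹ x)/(1 - q^l t x)`. -/
noncomputable def Aprod (q t x : ℂ) : ℂ := ∏' l : ℕ, (1 - q^(l+1)*t⁻¹*x)/(1 - q^l*t*x)

lemma Aprod_eq_gseq (q t x : ℂ) : Aprod q t x = ∏' l, gseq q (q*t⁻¹*x) (t*x) l := by
  apply tprod_congr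
  intro l
  simp only [gseq, pow_succ']
  ring_nf

lemma Aprod_up {q t x : ℂ} (hq1 : ‖q‖ < 1)
    (hv : ∀ l : ℕ, q^l * (t*x) ≠ 1) (hu : 1 - q*t⁻¹*x ≠ 0) :
    Aprod q t (q*x) = (1 - t*x)/(1 - q*t⁻¹*x) * Aprod q t x := by
  have e1 : Aprod q t (q*x) = ∏' l, gseq q (q*(q*t⁻¹*x)) (q*(t*x)) l := by
    rw [Aprod_eq_gseq]
    congr 1 <;> ring
  have e2 := gseq_shift hq1 (q*t⁻¹*x) (t*x) hv
  have hv0 : (1 : ℂ) - t*x ≠ 0 := by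
    have := hv 0; simp only [pow_zero, one_mul] at this
    exact sub_ne_zero.mpr fun h => this h.symm
  have hcc : (1 - t*x)/(1 - q*t⁻¹*x) * ((1 - q*t⁻¹*x)/(1 - t*x)) = 1 := by
    rw [div_mul_div_comm, mul_comm (1 - t*x)]
    exact div_self (mul_ne_zero hu hv0)
  rw [e1, Aprod_eq_gseq q t x, e2,
    ← mul_assoc ((1 - t*x)/(1 - q*t⁻¹*x)) ((1 - q*t⁻¹*x)/(1 - t*x)), hcc, one_mul]

lemma Aprod_down {q t x : ℂ} (hq : q ≠ 0) (hq1 : ‖q‖ < 1)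
    (hv' : ∀ l : ℕ, q^l * (q⁻¹*(t*x)) ≠ 1) :
    Aprod q t (q⁻¹*x) = (1 - t⁻¹*x)/(1 - q⁻¹*(t*x)) * Aprod q t x := by
  have a1 : q*t⁻¹*(q⁻¹*x) = t⁻¹*x := by
    rw [show q*t⁻¹*(q⁻¹*x) = (q*q⁻¹)*(t⁻¹*x) from by ring, mul_inv_cancel₀ hq, one_mul]
  have a2 : t*(q⁻¹*x) = q⁻¹*(t*x) := by ring
  have e1 : Aprod q t (q⁻¹*x) = ∏' l, gseq q (t⁻¹*x) (q⁻¹*(t*x)) l := by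
    rw [Aprod_eq_gseq, a1, a2]
  have e2 := gseq_shift hq1 (t⁻¹*x) (q⁻¹*(t*x)) hv'
  have a3 : q*(t⁻¹*x) = q*t⁻¹*x := by ring
  have a4 : q*(q⁻¹*(t*x)) = t*x := by
    rw [show q*(q⁻¹*(t*x)) = (q*q⁻¹)*(t*x) from by ring, mul_inv_cancel₀ hq, one_mul]
  rw [e1, e2, a3, a4, Aprod_eq_gseq q t x]

/-- `F(x) = (1-x) A(x)`. -/
noncomputable def Fq (q t x : ℂ) : ℂ := (1 - x) * Aprod q t x


lemma keyRat (n : ℕ) (hn : 1 ≤ n) (t : ℂ) (x : Fin n → ℂ) (hx0 : ∀ i, x i ≠ 0)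
    (hinj : Function.Injective x) :
    ∑ i : Fin n, ∏ j ∈ univ.erase i, (x i - t * x j) / (x i - x j)
      = ∑ k ∈ Finset.range n, t ^ k := by
  have hsub : ∀ i j : Fin n, i ≠ j → x i - x j ≠ 0 :=
    fun i j hij => sub_ne_zero.mpr fun h => hij (hinj h)
  by_cases ht1 : t = 1
  · subst ht1
    have h1 : ∀ i : Fin n, ∏ j ∈ univ.erase i, (x i - 1 * x j) / (x i - x j) = 1 := by
      intro i
      apply Finset.prod_eq_one
      intro j hj
      have hij : i ≠ j := fun h => (Finset.mem_erase.mp hj).1 h.symm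
      rw [one_mul, div_self (hsub i j hij)]
    rw [Finset.sum_congr rfl (fun i _ => h1 i)]
    simp
  · set p : ℂ[X] := ∏ j : Fin n, (X - C (t * x j)) with hp
    set q : ℂ[X] := ∏ j : Fin n, (X - C (x j)) with hqq
    have hpm : p.Monic := monic_prod_of_monic _ _ fun j _ => monic_X_sub_C _
    have hqm : q.Monic := monic_prod_of_monic _ _ fun j _ => monic_X_sub_C _
    have hpdeg : p.natDegree = n := by
      rw [hp, natDegree_prod_of_monic _ _ fun j _ => monic_X_sub_C _]
      simp only [natDegree_X_sub_C]; simp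
    have hqdeg : q.natDegree = n := by
      rw [hqq, natDegree_prod_of_monic _ _ fun j _ => monic_X_sub_C _]
      simp only [natDegree_X_sub_C]; simp
    have hdlt : (p - q).degree < (#(univ : Finset (Fin n)) : ℕ) := by
      have h1 : (p - q).degree < p.degree := by
        apply degree_sub_lt _ hpm.ne_zero (by rw [hpm.leadingCoeff, hqm.leadingCoeff])
        rw [degree_eq_natDegree hpm.ne_zero, degree_eq_natDegree hqm.ne_zero, hpdeg, hqdeg]
      have h2 : p.degree = (n : ℕ) := by
        rw [degree_eq_natDegree hpm.ne_zero, hpdeg]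
      rw [card_univ, Fintype.card_fin]
      rw [h2] at h1
      exact_mod_cast h1
    have hint := Lagrange.eq_interpolate (f := p - q) hinj.injOn hdlt
    have hev := congrArg (fun f => Polynomial.eval 0 f) hint
    simp only [Lagrange.interpolate_apply] at hev
    rw [eval_finset_sum] at hev
    -- compute evals
    have hqev : ∀ i : Fin n, q.eval (x i) = 0 := by
      intro i
      rw [hqq, eval_prod]
      exact Finset.prod_eq_zero (mem_univ i) (by simp)
    have hpev : ∀ i : Fin n, p.eval (x i) = ∏ j : Fin n, (x i - t * x j) := by
      intro i; rw [hp, eval_prod]; simp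
    have hbasis : ∀ i : Fin n, (Lagrange.basis univ x i).eval 0
        = ∏ j ∈ univ.erase i, ((x i - x j)⁻¹ * (0 - x j)) := by
      intro i
      rw [Lagrange.basis, eval_prod]
      exact Finset.prod_congr rfl fun j _ => by simp [Lagrange.basisDivisor]
    have hev0 : (p - q).eval 0 = (-1)^n * t^n * (∏ j, x j) - (-1)^n * (∏ j, x j) := by
      rw [eval_sub, hp, hqq, eval_prod, eval_prod]
      simp only [eval_sub, eval_X, eval_C, zero_sub]
      have e1 : ∏ j : Fin n, -(t * x j) = (-1)^n * t^n * ∏ j, x j := by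
        rw [show (fun j : Fin n => -(t * x j)) = fun j => (-1 * t) * x j by funext j; ring]
        rw [Finset.prod_mul_distrib, Finset.prod_const, card_univ, Fintype.card_fin]
        ring
      have e2 : ∏ j : Fin n, -(x j) = (-1)^n * ∏ j, x j := by
        rw [show (fun j : Fin n => -(x j)) = fun j => (-1) * x j by funext j; ring]
        rw [Finset.prod_mul_distrib, Finset.prod_const, card_univ, Fintype.card_fin]
      rw [e1, e2]
    -- rewrite each summand
    obtain ⟨m, rfl⟩ : ∃ m, n = m + 1 := ⟨n - 1, (Nat.succ_pred_eq_of_pos hn).symm⟩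
    have hsummand : ∀ i : Fin (m+1),
        ((p - q).eval (x i)) * ((Lagrange.basis univ x i).eval 0)
        = ((1 - t) * (-1)^m * (∏ j, x j)) *
            ∏ j ∈ univ.erase i, (x i - t * x j) / (x i - x j) := by
      intro i
      rw [eval_sub, hqev i, sub_zero, hpev i, hbasis i]
      rw [← Finset.mul_prod_erase univ (fun j => x i - t * x j) (mem_univ i)]
      rw [← Finset.mul_prod_erase univ x (mem_univ i)]
      rw [Finset.prod_mul_distrib]
      have e3 : ∏ j ∈ univ.erase i, (0 - x j) = (-1)^m * ∏ j ∈ univ.erase i, x j := by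
        rw [show (fun j : Fin (m+1) => 0 - x j) = fun j => (-1) * x j by funext j; ring]
        rw [Finset.prod_mul_distrib, Finset.prod_const, card_erase_of_mem (mem_univ i),
          card_univ, Fintype.card_fin]
        simp
      rw [e3]
      have e4 : ∏ j ∈ univ.erase i, (x i - t * x j) / (x i - x j)
          = (∏ j ∈ univ.erase i, (x i - t * x j)) * ∏ j ∈ univ.erase i, (x i - x j)⁻¹ := by
        rw [← Finset.prod_mul_distrib]
        exact Finset.prod_congr rfl fun j _ => div_eq_mul_inv _ _
      rw [e4]
      ring
    simp only [eval_mul, eval_C] at hev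
    rw [Finset.sum_congr rfl (fun i _ => hsummand i), ← Finset.mul_sum] at hev
    rw [hev0] at hev
    have hc : ((1 - t) * (-1)^m * (∏ j, x j)) ≠ 0 := by
      refine mul_ne_zero (mul_ne_zero (sub_ne_zero.mpr fun h => ht1 h.symm) ?_) ?_
      · exact pow_ne_zero _ (by norm_num)
      · exact Finset.prod_ne_zero_iff.mpr fun j _ => hx0 j
    apply mul_left_cancel₀ hc
    rw [← hev, geom_sum_eq ht1]
    have ht1' : t - 1 ≠ 0 := sub_ne_zero.mpr ht1
    field_simp
    ring


lemma prod_pairs_split (n : ℕ) (i : Fin n) (f : Fin n × Fin n → ℂ) :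
    ∏ p ∈ univ.filter (fun p : Fin n × Fin n => p.1 < p.2), f p
      = (∏ j ∈ univ.filter (fun j => i < j), f (i, j)) *
        (∏ k ∈ univ.filter (fun k => k < i), f (k, i)) *
        ∏ p ∈ univ.filter (fun p : Fin n × Fin n => p.1 < p.2 ∧ p.1 ≠ i ∧ p.2 ≠ i), f p := by
  classical
  set S := univ.filter (fun p : Fin n × Fin n => p.1 < p.2) with hS
  rw [← Finset.prod_filter_mul_prod_filter_not S (fun p => p.1 = i)]
  rw [← Finset.prod_filter_mul_prod_filter_not (S.filter (fun p => ¬ p.1 = i)) (fun p => p.2 = i)]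
  have e1 : S.filter (fun p => p.1 = i) = (univ.filter (fun j => i < j)).image (fun j => (i, j)) := by
    ext ⟨a, b⟩
    simp only [hS, mem_filter, mem_univ, true_and, mem_image, Finset.filter_filter,
      Prod.mk.injEq]
    constructor
    · rintro ⟨h1, rfl⟩; exact ⟨b, h1, rfl, rfl⟩
    · rintro ⟨j, hj, rfl, rfl⟩; exact ⟨hj, rfl⟩
  have e2 : (S.filter (fun p => ¬ p.1 = i)).filter (fun p => p.2 = i)
      = (univ.filter (fun k => k < i)).image (fun k => (k, i)) := by
    ext ⟨a, b⟩
    simp only [hS, Finset.filter_filter, mem_filter, mem_univ, true_and, mem_image,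
      Prod.mk.injEq]
    constructor
    · rintro ⟨⟨h1, h2⟩, rfl⟩; exact ⟨a, h1, rfl, rfl⟩
    · rintro ⟨k, hk, rfl, rfl⟩; exact ⟨⟨hk, ne_of_lt hk⟩, rfl⟩
  have e3 : (S.filter (fun p => ¬ p.1 = i)).filter (fun p => ¬ p.2 = i)
      = univ.filter (fun p : Fin n × Fin n => p.1 < p.2 ∧ p.1 ≠ i ∧ p.2 ≠ i) := by
    ext p
    simp [hS, Finset.filter_filter, and_assoc]
  rw [e1, e2, e3]
  rw [Finset.prod_image (by intro a _ b _ h; simpa using h),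
    Finset.prod_image (by intro a _ b _ h; simpa using h)]
  ring
/-- The infinite product
`G(ζ₁,…,ζ_n) = ∏_{1≤i<j≤n} (1 − ζ_j/ζ_i) ∏_{l=0}^∞ (1 − q^{l+1} t⁻¹ ζ_j/ζ_i)/(1 − q^l t ζ_j/ζ_i)`. -/
noncomputable def Gfun (n : ℕ) (q t : ℂ) (ζ : Fin n → ℂ) : ℂ :=
  ∏ p ∈ Finset.univ.filter (fun p : Fin n × Fin n => p.1 < p.2),
    ((1 - ζ p.2 / ζ p.1) *
      ∏' l : ℕ, (1 - q ^ (l + 1) * t⁻¹ * ζ p.2 / ζ p.1) / (1 - q ^ l * t * ζ p.2 / ζ p.1))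

/-- The infinite product `G` is an eigenfunction of the Macdonald-type
difference operator `D` with parameters `(s₁,…,s_n) = (1, t, …, t^{n−1})`, with eigenvalue
`1 + t + ⋯ + t^{n−1}`. -/
theorem statement9 (n : ℕ) (hn : 2 ≤ n) (q t : ℂ) (hq : q ≠ 0) (ht : t ≠ 0)
    (hq1 : ‖q‖ < 1) (ζ : Fin n → ℂ) (hζ : ∀ i, ζ i ≠ 0)
    (hne : ∀ i j : Fin n, i ≠ j → ζ i ≠ ζ j)
    (hneq : ∀ i j : Fin n, i ≠ j → ζ i ≠ q * ζ j ∧ ζ i ≠ q⁻¹ * ζ j)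
    (hpole : ∀ i j : Fin n, i ≠ j → ∀ l : ℤ, -1 ≤ l → t * ζ j / ζ i ≠ (q ^ l)⁻¹) :
    ∑ i : Fin n,
        t ^ (i : ℕ) *
          (∏ j ∈ Finset.univ.filter (fun j : Fin n => j < i),
            (1 - q⁻¹ * t * ζ i / ζ j) / (1 - q⁻¹ * ζ i / ζ j)) *
          (∏ j ∈ Finset.univ.filter (fun j : Fin n => i < j),
            (1 - q * t⁻¹ * ζ j / ζ i) / (1 - q * ζ j / ζ i)) *
          Gfun n q t (Function.update ζ i (q⁻¹ * ζ i))
      = (∑ i ∈ Finset.range n, t ^ i) * Gfun n q t ζ := by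
  classical
  -- normalized pole conditions
  have hp' : ∀ i j : Fin n, i ≠ j → ∀ l : ℤ, -1 ≤ l → q ^ l * (t * (ζ j / ζ i)) ≠ 1 := by
    intro i j hij l hl h
    apply hpole i j hij l hl
    rw [mul_div_assoc]
    exact eq_inv_of_mul_eq_one_right h
  have hvN : ∀ i j : Fin n, i ≠ j → ∀ l : ℕ, q ^ l * (t * (ζ j / ζ i)) ≠ 1 := by
    intro i j hij l
    have h := hp' i j hij (l : ℤ) (by omega)
    rwa [zpow_natCast] at h
  have hvN' : ∀ i j : Fin n, i ≠ j → ∀ l : ℕ, q ^ l * (q⁻¹ * (t * (ζ j / ζ i))) ≠ 1 := by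
    intro i j hij l
    have h := hp' i j hij ((l : ℤ) - 1) (by omega)
    rw [zpow_sub_one₀ hq, zpow_natCast] at h
    intro hc; exact h (by rw [← hc]; ring)
  have hinjζ : Function.Injective ζ := by
    intro a b hab
    by_contra hab'
    exact hne a b hab' hab
  have hsub : ∀ i j : Fin n, i ≠ j → ζ i - ζ j ≠ 0 :=
    fun i j hij => sub_ne_zero.mpr (hne i j hij)
  -- nonvanishing of the various linear factors (x = ζ j / ζ i throughout)
  have h1x : ∀ i j : Fin n, i ≠ j → 1 - ζ j / ζ i ≠ 0 := by
    intro i j hij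
    refine sub_ne_zero.mpr fun h => hne j i hij.symm ?_
    field_simp [hζ i, hζ j] at h
    first
    | linear_combination h
    | linear_combination -h
    | linear_combination q * h
    | linear_combination -q * h
    | linear_combination t * h
    | linear_combination -t * h
    | linear_combination q * t * h
    | linear_combination -q * t * h
  have h1qx : ∀ i j : Fin n, i ≠ j → 1 - q * (ζ j / ζ i) ≠ 0 := by
    intro i j hij
    refine sub_ne_zero.mpr fun h => (hneq j i hij.symm).2 ?_
    field_simp [hζ i, hζ j] at h ⊢
    first
    | linear_combination h
    | linear_combination -h
    | linear_combination q * h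
    | linear_combination -q * h
    | linear_combination t * h
    | linear_combination -t * h
    | linear_combination q * t * h
    | linear_combination -q * t * h
  have h1q'x : ∀ i j : Fin n, i ≠ j → 1 - q⁻¹ * (ζ j / ζ i) ≠ 0 := by
    intro i j hij
    refine sub_ne_zero.mpr fun h => (hneq j i hij.symm).1 ?_
    field_simp [hζ i, hζ j] at h ⊢
    first
    | linear_combination h
    | linear_combination -h
    | linear_combination q * h
    | linear_combination -q * h
    | linear_combination t * h
    | linear_combination -t * h
    | linear_combination q * t * h
    | linear_combination -q * t * h
  have h1tx : ∀ i j : Fin n, i ≠ j → 1 - t * (ζ j / ζ i) ≠ 0 := by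
    intro i j hij
    refine sub_ne_zero.mpr fun h => hvN i j hij 0 ?_
    rw [pow_zero, one_mul]; exact h.symm
  have h1t'x : ∀ i j : Fin n, i ≠ j → 1 - t⁻¹ * (ζ j / ζ i) ≠ 0 := by
    intro i j hij
    refine sub_ne_zero.mpr fun h => hvN j i hij.symm 0 ?_
    rw [pow_zero, one_mul]
    field_simp [hζ i, hζ j] at h ⊢
    first
    | linear_combination h
    | linear_combination -h
    | linear_combination q * h
    | linear_combination -q * h
    | linear_combination t * h
    | linear_combination -t * h
    | linear_combination q * t * h
    | linear_combination -q * t * h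
  have h1qt'x : ∀ i j : Fin n, i ≠ j → 1 - q * t⁻¹ * (ζ j / ζ i) ≠ 0 := by
    intro i j hij
    refine sub_ne_zero.mpr fun h => hvN' j i hij.symm 0 ?_
    rw [pow_zero, one_mul]
    field_simp [hζ i, hζ j] at h ⊢
    first
    | linear_combination h
    | linear_combination -h
    | linear_combination q * h
    | linear_combination -q * h
    | linear_combination t * h
    | linear_combination -t * h
    | linear_combination q * t * h
    | linear_combination -q * t * h
  have h1q'tx : ∀ i j : Fin n, i ≠ j → 1 - q⁻¹ * (t * (ζ j / ζ i)) ≠ 0 := by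
    intro i j hij
    refine sub_ne_zero.mpr fun h => hvN' i j hij 0 ?_
    rw [pow_zero, one_mul]; exact h.symm
  -- Gfun in terms of Fq
  have hGfun : ∀ ξ : Fin n → ℂ,
      Gfun n q t ξ = ∏ p ∈ Finset.univ.filter (fun p : Fin n × Fin n => p.1 < p.2),
        Fq q t (ξ p.2 / ξ p.1) := by
    intro ξ
    apply Finset.prod_congr rfl
    intro p _
    rw [Fq]
    congr 1
    rw [Aprod]
    apply tprod_congr
    intro l
    rw [mul_div_assoc, mul_div_assoc]
    -- the key per-term identity
  have hterm : ∀ i : Fin n,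
      t ^ (i : ℕ) *
          (∏ j ∈ Finset.univ.filter (fun j : Fin n => j < i),
            (1 - q⁻¹ * t * ζ i / ζ j) / (1 - q⁻¹ * ζ i / ζ j)) *
          (∏ j ∈ Finset.univ.filter (fun j : Fin n => i < j),
            (1 - q * t⁻¹ * ζ j / ζ i) / (1 - q * ζ j / ζ i)) *
          Gfun n q t (Function.update ζ i (q⁻¹ * ζ i))
      = (∏ j ∈ Finset.univ.erase i, (ζ i - t * ζ j) / (ζ i - ζ j)) * Gfun n q t ζ := by
    intro i
    set ζ' := Function.update ζ i (q⁻¹ * ζ i) with hζ'def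
    rw [hGfun ζ', hGfun ζ, prod_pairs_split n i, prod_pairs_split n i]
    have hrest : ∏ p ∈ univ.filter (fun p : Fin n × Fin n => p.1 < p.2 ∧ p.1 ≠ i ∧ p.2 ≠ i),
        Fq q t (ζ' p.2 / ζ' p.1)
        = ∏ p ∈ univ.filter (fun p : Fin n × Fin n => p.1 < p.2 ∧ p.1 ≠ i ∧ p.2 ≠ i),
        Fq q t (ζ p.2 / ζ p.1) := by
      refine Finset.prod_congr rfl fun p hp => ?_
      obtain ⟨-, hp1, hp2⟩ := (Finset.mem_filter.mp hp).2
      rw [hζ'def, Function.update_of_ne hp2, Function.update_of_ne hp1]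
    have hup : ∏ j ∈ univ.filter (fun j => i < j), Fq q t (ζ' j / ζ' i)
        = ∏ j ∈ univ.filter (fun j => i < j), Fq q t (q * (ζ j / ζ i)) := by
      refine Finset.prod_congr rfl fun j hj => ?_
      have hij : i < j := (Finset.mem_filter.mp hj).2
      rw [hζ'def, Function.update_of_ne (ne_of_gt hij), Function.update_self]
      congr 1
      field_simp [hζ i]
    have hdown : ∏ k ∈ univ.filter (fun k => k < i), Fq q t (ζ' i / ζ' k)
        = ∏ k ∈ univ.filter (fun k => k < i), Fq q t (q⁻¹ * (ζ i / ζ k)) := by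
      refine Finset.prod_congr rfl fun k hk => ?_
      have hki : k < i := (Finset.mem_filter.mp hk).2
      rw [hζ'def, Function.update_self, Function.update_of_ne (ne_of_lt hki), mul_div_assoc]
    rw [hrest, hup, hdown]
    -- pointwise identities
    have hBj : ∀ j : Fin n, i < j →
        (1 - q * t⁻¹ * ζ j / ζ i) / (1 - q * ζ j / ζ i) * Fq q t (q * (ζ j / ζ i))
        = (ζ i - t * ζ j) / (ζ i - ζ j) * Fq q t (ζ j / ζ i) := by
      intro j hj
      have hij : i ≠ j := ne_of_lt hj
      rw [Fq, Fq, Aprod_up hq1 (hvN i j hij) (h1qt'x i j hij)]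
      have n1 := h1qx i j hij
      have n2 := h1qt'x i j hij
      have n4 := hsub i j hij
      set A := Aprod q t (ζ j / ζ i) with hA
      have c1 : (1 - q * t⁻¹ * ζ j / ζ i) / (1 - q * ζ j / ζ i) * (1 - q * (ζ j / ζ i))
          = 1 - q * t⁻¹ * (ζ j / ζ i) := by
        rw [show 1 - q * t⁻¹ * ζ j / ζ i = 1 - q * t⁻¹ * (ζ j / ζ i) from by rw [mul_div_assoc],
          show 1 - q * ζ j / ζ i = 1 - q * (ζ j / ζ i) from by rw [mul_div_assoc]]
        exact div_mul_cancel₀ _ n1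
      have c3 : (1 - t * (ζ j / ζ i)) = (ζ i - t * ζ j) / (ζ i - ζ j) * (1 - ζ j / ζ i) := by
        rw [div_mul_eq_mul_div, eq_div_iff n4]
        field_simp [hζ i]
      calc (1 - q * t⁻¹ * ζ j / ζ i) / (1 - q * ζ j / ζ i) *
          ((1 - q * (ζ j / ζ i)) * ((1 - t * (ζ j / ζ i)) / (1 - q * t⁻¹ * (ζ j / ζ i)) * A))
          = ((1 - q * t⁻¹ * ζ j / ζ i) / (1 - q * ζ j / ζ i) * (1 - q * (ζ j / ζ i))) *
            ((1 - t * (ζ j / ζ i)) / (1 - q * t⁻¹ * (ζ j / ζ i)) * A) := by ring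
        _ = (1 - q * t⁻¹ * (ζ j / ζ i)) *
            ((1 - t * (ζ j / ζ i)) / (1 - q * t⁻¹ * (ζ j / ζ i)) * A) := by rw [c1]
        _ = (1 - t * (ζ j / ζ i)) * A := by
            rw [← mul_assoc, mul_comm (1 - q * t⁻¹ * (ζ j / ζ i)), div_mul_cancel₀ _ n2]
        _ = (ζ i - t * ζ j) / (ζ i - ζ j) * ((1 - ζ j / ζ i) * A) := by rw [c3]; ring
    have hBk : ∀ k : Fin n, k < i →
        (1 - q⁻¹ * t * ζ i / ζ k) / (1 - q⁻¹ * ζ i / ζ k) * Fq q t (q⁻¹ * (ζ i / ζ k))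
        = t⁻¹ * ((ζ i - t * ζ k) / (ζ i - ζ k) * Fq q t (ζ i / ζ k)) := by
      intro k hk
      have hki : k ≠ i := ne_of_lt hk
      rw [Fq, Fq, Aprod_down hq hq1 (hvN' k i hki)]
      have n1 := h1q'x k i hki
      have n2 := h1q'tx k i hki
      have n4 := hsub i k hki.symm
      set A := Aprod q t (ζ i / ζ k) with hA
      have c1 : (1 - q⁻¹ * t * ζ i / ζ k) / (1 - q⁻¹ * ζ i / ζ k) * (1 - q⁻¹ * (ζ i / ζ k))
          = 1 - q⁻¹ * (t * (ζ i / ζ k)) := by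
        rw [show 1 - q⁻¹ * t * ζ i / ζ k = 1 - q⁻¹ * (t * (ζ i / ζ k)) from by
            rw [mul_div_assoc, mul_assoc],
          show 1 - q⁻¹ * ζ i / ζ k = 1 - q⁻¹ * (ζ i / ζ k) from by rw [mul_div_assoc]]
        exact div_mul_cancel₀ _ n1
      have c3 : (1 - t⁻¹ * (ζ i / ζ k))
          = t⁻¹ * ((ζ i - t * ζ k) / (ζ i - ζ k) * (1 - ζ i / ζ k)) := by
        field_simp [hζ k, ht]
        ring
      calc (1 - q⁻¹ * t * ζ i / ζ k) / (1 - q⁻¹ * ζ i / ζ k) *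
          ((1 - q⁻¹ * (ζ i / ζ k)) * ((1 - t⁻¹ * (ζ i / ζ k)) / (1 - q⁻¹ * (t * (ζ i / ζ k))) * A))
          = ((1 - q⁻¹ * t * ζ i / ζ k) / (1 - q⁻¹ * ζ i / ζ k) * (1 - q⁻¹ * (ζ i / ζ k))) *
            ((1 - t⁻¹ * (ζ i / ζ k)) / (1 - q⁻¹ * (t * (ζ i / ζ k))) * A) := by ring
        _ = (1 - q⁻¹ * (t * (ζ i / ζ k))) *
            ((1 - t⁻¹ * (ζ i / ζ k)) / (1 - q⁻¹ * (t * (ζ i / ζ k))) * A) := by rw [c1]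
        _ = (1 - t⁻¹ * (ζ i / ζ k)) * A := by
            rw [← mul_assoc, mul_comm (1 - q⁻¹ * (t * (ζ i / ζ k))), div_mul_cancel₀ _ n2]
        _ = t⁻¹ * ((ζ i - t * ζ k) / (ζ i - ζ k) * ((1 - ζ i / ζ k) * A)) := by rw [c3]; ring
    -- combine over the two filters
    have key1 : (∏ j ∈ univ.filter (fun j => i < j), (1 - q * t⁻¹ * ζ j / ζ i) / (1 - q * ζ j / ζ i))
        * ∏ j ∈ univ.filter (fun j => i < j), Fq q t (q * (ζ j / ζ i))
        = (∏ j ∈ univ.filter (fun j => i < j), (ζ i - t * ζ j) / (ζ i - ζ j))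
          * ∏ j ∈ univ.filter (fun j => i < j), Fq q t (ζ j / ζ i) := by
      rw [← Finset.prod_mul_distrib, ← Finset.prod_mul_distrib]
      exact Finset.prod_congr rfl fun j hj => hBj j (Finset.mem_filter.mp hj).2
    have hcard : #(univ.filter (fun k : Fin n => k < i)) = (i : ℕ) := by
      have : univ.filter (fun k : Fin n => k < i) = Finset.Iio i := by
        ext k; simp [Finset.mem_Iio]
      rw [this, Fin.card_Iio]
    have key2 : (∏ k ∈ univ.filter (fun k => k < i), (1 - q⁻¹ * t * ζ i / ζ k) / (1 - q⁻¹ * ζ i / ζ k))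
        * ∏ k ∈ univ.filter (fun k => k < i), Fq q t (q⁻¹ * (ζ i / ζ k))
        = (t⁻¹) ^ (i : ℕ) * ((∏ k ∈ univ.filter (fun k => k < i), (ζ i - t * ζ k) / (ζ i - ζ k))
          * ∏ k ∈ univ.filter (fun k => k < i), Fq q t (ζ i / ζ k)) := by
      rw [← Finset.prod_mul_distrib]
      rw [Finset.prod_congr rfl fun k hk => hBk k (Finset.mem_filter.mp hk).2]
      rw [Finset.prod_mul_distrib, Finset.prod_const, hcard, Finset.prod_mul_distrib]
    have hW : ∏ j ∈ Finset.univ.erase i, (ζ i - t * ζ j) / (ζ i - ζ j)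
        = (∏ k ∈ univ.filter (fun k => k < i), (ζ i - t * ζ k) / (ζ i - ζ k))
          * ∏ j ∈ univ.filter (fun j => i < j), (ζ i - t * ζ j) / (ζ i - ζ j) := by
      rw [← Finset.prod_union (by
        rw [Finset.disjoint_left]
        intro a ha hb
        simp only [Finset.mem_filter, Finset.mem_univ, true_and] at ha hb
        exact absurd hb (not_lt.mpr ha.le))]
      apply Finset.prod_congr _ fun _ _ => rfl
      ext a
      simp only [Finset.mem_erase, Finset.mem_union, Finset.mem_filter, Finset.mem_univ,
        true_and, and_true]
      constructor
      · intro h; exact lt_or_gt_of_ne h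
      · rintro (h | h)
        · exact ne_of_lt h
        · exact ne_of_gt h
    have htt : (t : ℂ) ^ (i : ℕ) * (t⁻¹) ^ (i : ℕ) = 1 := by
      rw [← mul_pow, mul_inv_cancel₀ ht, one_pow]
    -- final bookkeeping
    set P1 := ∏ j ∈ univ.filter (fun j : Fin n => j < i),
      (1 - q⁻¹ * t * ζ i / ζ j) / (1 - q⁻¹ * ζ i / ζ j) with hP1
    set P2 := ∏ j ∈ univ.filter (fun j : Fin n => i < j),
      (1 - q * t⁻¹ * ζ j / ζ i) / (1 - q * ζ j / ζ i) with hP2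
    set U' := ∏ j ∈ univ.filter (fun j : Fin n => i < j), Fq q t (q * (ζ j / ζ i)) with hU'
    set D' := ∏ k ∈ univ.filter (fun k : Fin n => k < i), Fq q t (q⁻¹ * (ζ i / ζ k)) with hD'
    set U := ∏ j ∈ univ.filter (fun j : Fin n => i < j), Fq q t (ζ j / ζ i) with hU
    set D := ∏ k ∈ univ.filter (fun k : Fin n => k < i), Fq q t (ζ i / ζ k) with hD
    set WU := ∏ j ∈ univ.filter (fun j : Fin n => i < j), (ζ i - t * ζ j) / (ζ i - ζ j) with hWU
    set WD := ∏ k ∈ univ.filter (fun k : Fin n => k < i), (ζ i - t * ζ k) / (ζ i - ζ k) with hWD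
    set R := ∏ p ∈ univ.filter (fun p : Fin n × Fin n => p.1 < p.2 ∧ p.1 ≠ i ∧ p.2 ≠ i),
      Fq q t (ζ p.2 / ζ p.1) with hR
    rw [hW]
    calc t ^ (i:ℕ) * P1 * P2 * (U' * D' * R)
        = t ^ (i:ℕ) * (P1 * D') * (P2 * U') * R := by ring
      _ = t ^ (i:ℕ) * ((t⁻¹) ^ (i:ℕ) * (WD * D)) * (WU * U) * R := by rw [key2, key1]
      _ = (t ^ (i:ℕ) * (t⁻¹) ^ (i:ℕ)) * (WD * WU) * (U * D * R) := by ring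
      _ = WD * WU * (U * D * R) := by rw [htt, one_mul]

  rw [Finset.sum_congr rfl fun i _ => hterm i, ← Finset.sum_mul]
  congr 1
  exact keyRat n (by omega) t ζ hζ hinjζ
end

section
/- Let n ≥ 1, let t be a nonzero complex number, and let ζ₁, …, ζ_n be pairwise distinct complex numbers. Then Σ_{i=1}^n ∏_{j≠i} (t^{−1}ζ_i − ζ_j)/(ζ_i − ζ_j) = 1 + t^{−1} + t^{−2} + ⋯ + t^{−(n−1)}. -/
open Polynomial Finset

lemma coeff_basis_top {ι : Type*} [DecidableEq ι] (s : Finset ι) (v : ι → ℂ)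
    {i : ι} (hi : i ∈ s) :
    (Lagrange.basis s v i).coeff (s.card - 1) = (∏ j ∈ s.erase i, (v i - v j))⁻¹ := by
  have hmon : (∏ j ∈ s.erase i, (X - C (v j)) : ℂ[X]).Monic :=
    monic_prod_of_monic _ _ fun j _ => monic_X_sub_C _
  have hdeg : (∏ j ∈ s.erase i, (X - C (v j)) : ℂ[X]).natDegree = s.card - 1 := by
    rw [natDegree_prod_of_monic _ _ fun j _ => monic_X_sub_C _]
    simp [card_erase_of_mem hi]
  have : Lagrange.basis s v i
      = C (∏ j ∈ s.erase i, (v i - v j)⁻¹) * ∏ j ∈ s.erase i, (X - C (v j)) := by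
    rw [Lagrange.basis]
    simp_rw [Lagrange.basisDivisor]
    rw [prod_mul_distrib, ← map_prod]
  rw [this, coeff_C_mul, ← hdeg, hmon.coeff_natDegree, mul_one, prod_inv_distrib]

lemma key_lagrange {ι : Type*} [DecidableEq ι] (s : Finset ι) (v : ι → ℂ)
    (hv : Set.InjOn v s) (hs : s.Nonempty) :
    ∑ i ∈ s, (v i) ^ (s.card - 1) / ∏ j ∈ s.erase i, (v i - v j) = 1 := by
  have hdeg : ((X : ℂ[X]) ^ (s.card - 1)).degree < s.card := by
    rw [degree_X_pow]
    exact_mod_cast Nat.sub_lt hs.card_pos one_pos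
  have h := Lagrange.eq_interpolate (v := v) hv hdeg
  have h2 := congrArg (fun p => Polynomial.coeff p (s.card - 1)) h
  simp only [Lagrange.interpolate_apply, finset_sum_coeff, coeff_C_mul,
    coeff_X_pow, if_true, eval_pow, eval_X] at h2
  exact (Finset.sum_congr rfl fun i hi => by
    rw [coeff_basis_top s v hi, div_eq_mul_inv]).trans h2.symm

lemma statement10_aux (n : ℕ) (hn : 1 ≤ n) (u : ℂ)
    (ζ : Fin n → ℂ) (hζ : Function.Injective ζ) :
    ∑ i : Fin n, ∏ j ∈ Finset.univ.erase i, (u * ζ i - ζ j) / (ζ i - ζ j)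
      = ∑ k ∈ Finset.range n, u ^ k := by
  classical
  have hsub : ∀ (i j : Fin n), i ≠ j → ζ i - ζ j ≠ 0 := fun i j hij =>
    sub_ne_zero.mpr fun h => hij (hζ h)
  -- Step 1: expand each product via the binomial-type expansion
  have hterm : ∀ i : Fin n,
      ∏ j ∈ Finset.univ.erase i, (u * ζ i - ζ j) / (ζ i - ζ j)
      = ∑ S ∈ (Finset.univ.erase i).powerset,
          ((u - 1) * ζ i) ^ S.card / ∏ j ∈ S, (ζ i - ζ j) := by
    intro i
    have hrw : ∀ j : Fin n, u * ζ i - ζ j = (u - 1) * ζ i + (ζ i - ζ j) := by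
      intro j; ring
    simp_rw [hrw]
    rw [prod_div_distrib, prod_add, sum_div]
    refine Finset.sum_congr rfl fun S hS => ?_
    rw [mem_powerset] at hS
    have hA : (∏ j ∈ Finset.univ.erase i \ S, (ζ i - ζ j)) ≠ 0 := by
      rw [prod_ne_zero_iff]
      intro j hj
      exact hsub i j fun h => (mem_erase.mp (mem_sdiff.mp hj).1).1 h.symm
    rw [prod_const, ← Finset.prod_sdiff hS, mul_comm (∏ j ∈ Finset.univ.erase i \ S, (ζ i - ζ j))
      (∏ j ∈ S, (ζ i - ζ j)), mul_div_mul_right _ _ hA]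
  simp_rw [hterm]
  -- Step 2: reindex the double sum over pairs (i, S) with S ⊆ univ.erase i
  have step2 : ∑ i : Fin n, ∑ S ∈ (Finset.univ.erase i).powerset,
        ((u - 1) * ζ i) ^ S.card / ∏ j ∈ S, (ζ i - ζ j)
      = ∑ T ∈ (Finset.univ : Finset (Fin n)).powerset, ∑ i ∈ T,
        ((u - 1) * ζ i) ^ (T.erase i).card / ∏ j ∈ T.erase i, (ζ i - ζ j) := by
    rw [Finset.sum_sigma' (Finset.univ) (fun i => (Finset.univ.erase i).powerset)
      (fun i S => ((u - 1) * ζ i) ^ S.card / ∏ j ∈ S, (ζ i - ζ j)),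
      Finset.sum_sigma' ((Finset.univ : Finset (Fin n)).powerset) (fun T => T)
      (fun T i => ((u - 1) * ζ i) ^ (T.erase i).card / ∏ j ∈ T.erase i, (ζ i - ζ j))]
    refine Finset.sum_nbij' (fun p => ⟨insert p.1 p.2, p.1⟩)
      (fun p => ⟨p.2, p.1.erase p.2⟩) ?_ ?_ ?_ ?_ ?_
    · rintro ⟨i, S⟩ hp
      rw [mem_sigma] at hp ⊢
      exact ⟨mem_powerset.mpr (subset_univ _), mem_insert_self _ _⟩
    · rintro ⟨T, i⟩ hp
      rw [mem_sigma] at hp ⊢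
      exact ⟨mem_univ _, mem_powerset.mpr ((erase_subset_erase i (mem_powerset.mp hp.1)))⟩
    · rintro ⟨i, S⟩ hp
      rw [mem_sigma, mem_powerset] at hp
      have hiS : i ∉ S := fun h => (mem_erase.mp (hp.2 h)).1 rfl
      simp [Finset.erase_insert hiS]
    · rintro ⟨T, i⟩ hp
      rw [mem_sigma] at hp
      simp [Finset.insert_erase hp.2]
    · rintro ⟨i, S⟩ hp
      rw [mem_sigma, mem_powerset] at hp
      have hiS : i ∉ S := fun h => (mem_erase.mp (hp.2 h)).1 rfl
      simp [Finset.erase_insert hiS]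
  rw [step2]
  -- Step 3: evaluate each inner sum via the Lagrange identity
  have step3 : ∀ T ∈ (Finset.univ : Finset (Fin n)).powerset,
      ∑ i ∈ T, ((u - 1) * ζ i) ^ (T.erase i).card / ∏ j ∈ T.erase i, (ζ i - ζ j)
      = (if T.card = 0 then 0 else (u - 1) ^ (T.card - 1)) := by
    intro T _
    rcases T.eq_empty_or_nonempty with rfl | hT
    · simp
    · rw [if_neg hT.card_pos.ne']
      have : ∀ i ∈ T, ((u - 1) * ζ i) ^ (T.erase i).card / ∏ j ∈ T.erase i, (ζ i - ζ j)
          = (u - 1) ^ (T.card - 1) * ((ζ i) ^ (T.card - 1) / ∏ j ∈ T.erase i, (ζ i - ζ j)) := by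
        intro i hi
        rw [card_erase_of_mem hi, mul_pow, mul_div_assoc]
      rw [Finset.sum_congr rfl this, ← Finset.mul_sum,
        key_lagrange T ζ (hζ.injOn) hT, mul_one]
  rw [Finset.sum_congr rfl step3, Finset.sum_powerset_apply_card
    (fun k => (if k = 0 then (0:ℂ) else (u - 1) ^ (k - 1)))]
  rw [Finset.card_univ, Fintype.card_fin]
  -- Step 4: the binomial / geometric series identity
  by_cases hu1 : u = 1
  · subst hu1
    rw [Finset.sum_eq_single 1]
    · simp
    · intro b _ hb1
      rcases Nat.eq_zero_or_pos b with rfl | hb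
      · simp
      · rw [if_neg (by omega), sub_self, zero_pow (by omega), smul_zero]
    · intro h; exact absurd (mem_range.mpr (by omega)) h
  · have h1 : u - 1 ≠ 0 := sub_ne_zero.mpr hu1
    apply mul_left_cancel₀ h1
    rw [Finset.mul_sum, mul_comm (u - 1) (∑ k ∈ Finset.range n, u ^ k), geom_sum_mul]
    have hlhs : ∀ k ∈ Finset.range (n + 1),
        (u - 1) * (n.choose k • (if k = 0 then (0:ℂ) else (u - 1) ^ (k - 1)))
        = n.choose k • (if k = 0 then (0:ℂ) else (u - 1) ^ k) := by
      intro k _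
      rcases Nat.eq_zero_or_pos k with rfl | hk
      · simp
      · rw [if_neg hk.ne', if_neg hk.ne', mul_smul_comm, ← pow_succ',
          Nat.sub_add_cancel hk]
    rw [Finset.sum_congr rfl hlhs]
    have hpow : u ^ n = ∑ k ∈ Finset.range (n + 1), (u - 1) ^ k * (n.choose k : ℂ) := by
      have := add_pow (u - 1) 1 n
      simp only [one_pow, mul_one, sub_add_cancel] at this
      exact this
    rw [hpow]
    rw [Finset.sum_range_succ' (fun k => n.choose k • (if k = 0 then (0:ℂ) else (u - 1) ^ k)) n]
    rw [Finset.sum_range_succ' (fun k => (u - 1) ^ k * (n.choose k : ℂ)) n]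
    simp only [if_pos rfl, if_neg (Nat.succ_ne_zero _), smul_zero, add_zero,
      Nat.choose_zero_right, Nat.cast_one, pow_zero, one_mul, add_sub_cancel_right]
    simp only [ite_true, if_true, smul_zero, add_zero]
    refine Finset.sum_congr rfl fun k _ => ?_
    rw [nsmul_eq_mul, mul_comm]

/-- For pairwise distinct `ζ₁, …, ζ_n` and `t ≠ 0`,
`∑_{i=1}^n ∏_{j≠i} (t⁻¹ζ_i − ζ_j)/(ζ_i − ζ_j) = 1 + t⁻¹ + ⋯ + t^{−(n−1)}`. -/
theorem statement10 (n : ℕ) (hn : 1 ≤ n) (t : ℂ) (ht : t ≠ 0)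
    (ζ : Fin n → ℂ) (hζ : Function.Injective ζ) :
    ∑ i : Fin n, ∏ j ∈ Finset.univ.erase i, (t⁻¹ * ζ i - ζ j) / (ζ i - ζ j)
      = ∑ k ∈ Finset.range n, (t⁻¹) ^ k :=
  statement10_aux n hn t⁻¹ ζ hζ
end

section
/- Let i ≥ 0 and n ≥ 0 be integers and let q, t be nonzero complex numbers such that q^{2i+k} ≠ 1 and q^{2i+k} ≠ t for k = 1, …, n. Then the rational function s ↦ (q^{1+2i} t^{−1} s;q)_n / (q^{1+2i} s;q)_n is differentiable at s = 1 and its derivative there equals −[(q^{1+2i} t^{−1};q)_n / (q^{1+2i};q)_n] · Σ_{k=1}^n [1/(1 − q^{−2i−k}) − 1/(1 − q^{−2i−k} t)]. (Equivalently, the coefficient of (ζ₂/ζ₁)^n in the series ₂φ₁(q t^{−1}, q^{1+2i} t^{−1} s; q^{1+2i} s; q, tζ₂/ζ₁) admits the expansion c_n(1) + (1−s)·c_n(1)·Σ_{k=1}^n [1/(1 − q^{−2i−k}) − 1/(1 − q^{−2i−k}t)] + O((1−s)²) at s = 1, where c_n(1) = (q t^{−1};q)_n (q^{1+2i}t^{−1};q)_n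 t^n/((q;q)_n (q^{1+2i};q)_n).) -/
/-!
With `a = q^{1+2i}` and `b = a t⁻¹`, the function is `(b s;q)_n / (a s;q)_n`, a ratio of products
of linear factors in `s`. Its logarithmic derivative is therefore
`∑_k [a q^k / (1 - a s q^k) - b q^k / (1 - b s q^k)]`, valid as soon as no factor vanishes at `s`;
at `s = 1` this is what the hypotheses guarantee. Writing `x = a q^k = q^{2i+k+1}`, each summand
equals `-(1/(1 - x⁻¹) - 1/(1 - x⁻¹ t))`.
-/

open Finset

theorem HasDerivAt.fun_finsetProd_of_ne_zero {𝕜 ι : Type*} [NontriviallyNormedField 𝕜]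
    {u : Finset ι} {f : ι → 𝕜 → 𝕜} {f' : ι → 𝕜} {x : 𝕜}
    (hf : ∀ k ∈ u, HasDerivAt (f k) (f' k) x) (h0 : ∀ k ∈ u, f k x ≠ 0) :
    HasDerivAt (fun y => ∏ k ∈ u, f k y)
      ((∏ k ∈ u, f k x) * ∑ k ∈ u, f' k / f k x) x := by
  classical
  refine (HasDerivAt.fun_finsetProd hf).congr_deriv ?_
  rw [mul_sum]
  refine sum_congr rfl fun k hk => ?_
  rw [← prod_erase_mul u (f · x) hk, smul_eq_mul]
  field_simp [h0 k hk]

theorem qp_ne_zero {q a : ℂ} {n : ℕ} (h : ∀ k < n, a * q ^ k ≠ 1) : qp q a n ≠ 0 :=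
  prod_ne_zero_iff.mpr fun k hk => sub_ne_zero.mpr (h k (mem_range.mp hk)).symm

theorem hasDerivAt_qp_mul (q a s : ℂ) (n : ℕ) (h : qp q (a * s) n ≠ 0) :
    HasDerivAt (fun s => qp q (a * s) n)
      (qp q (a * s) n * ∑ k ∈ range n, -(a * q ^ k) / (1 - a * s * q ^ k)) s := by
  have hfac : ∀ k ∈ range n, HasDerivAt (fun s => 1 - a * s * q ^ k) (-(a * q ^ k)) s :=
    fun k _ => by simpa using (((hasDerivAt_id s).const_mul a).mul_const (q ^ k)).const_sub 1
  exact HasDerivAt.fun_finsetProd_of_ne_zero hfac (prod_ne_zero_iff.mp h)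

theorem hasDerivAt_qp_mul_div_qp_mul (q a b s : ℂ) (n : ℕ) (ha : qp q (a * s) n ≠ 0)
    (hb : qp q (b * s) n ≠ 0) :
    HasDerivAt (fun s => qp q (b * s) n / qp q (a * s) n)
      (qp q (b * s) n / qp q (a * s) n *
        ∑ k ∈ range n, (a * q ^ k / (1 - a * s * q ^ k) - b * q ^ k / (1 - b * s * q ^ k)))
      s := by
  refine ((hasDerivAt_qp_mul q b s n hb).div
    (hasDerivAt_qp_mul q a s n ha) ha).congr_deriv ?_
  simp only [sum_sub_distrib, neg_div, sum_neg_distrib]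
  field_simp
  ring

theorem one_div_one_sub_inv_sub_one_div_one_sub_inv_mul {K : Type*} [Field K] (x c : K)
    (hc : c ≠ 0) :
    1 / (1 - x⁻¹) - 1 / (1 - x⁻¹ * c) = -(x / (1 - x) - x * c⁻¹ / (1 - x * c⁻¹)) := by
  rcases eq_or_ne x 0 with rfl | hx
  · -- both sides vanish here, although `key` below fails at `x = 0`
    simp
  have key : ∀ d : K, d ≠ 0 → 1 / (1 - x⁻¹ * d) = -(x * d⁻¹) / (1 - x * d⁻¹) := by
    intro d hd
    rw [show 1 - x⁻¹ * d = -(x⁻¹ * d) * (1 - x * d⁻¹) by field_simp; ring]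
    field_simp
  have h1 := key 1 one_ne_zero
  simp only [mul_one, inv_one] at h1
  rw [h1, key c hc]
  ring

theorem statement11_general (i n : ℕ) (q t : ℂ) (ht : t ≠ 0)
    (h1 : ∀ k : ℕ, 1 ≤ k → k ≤ n → q ^ (2 * i + k) ≠ 1)
    (h2 : ∀ k : ℕ, 1 ≤ k → k ≤ n → q ^ (2 * i + k) ≠ t) :
    HasDerivAt
      (fun s : ℂ => qp q (q ^ (1 + 2 * i) * t⁻¹ * s) n / qp q (q ^ (1 + 2 * i) * s) n)
      (-(qp q (q ^ (1 + 2 * i) * t⁻¹) n / qp q (q ^ (1 + 2 * i)) n) *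
        ∑ k ∈ Finset.Icc 1 n,
          (1 / (1 - (q ^ (2 * i + k))⁻¹) - 1 / (1 - (q ^ (2 * i + k))⁻¹ * t)))
      1 := by
  set a := q ^ (1 + 2 * i)
  have hpow : ∀ k, a * q ^ k = q ^ (2 * i + (1 + k)) := fun k => by
    rw [← pow_add]; ring_nf
  have ha : qp q a n ≠ 0 := qp_ne_zero fun k hk => hpow k ▸ h1 (1 + k) (by omega) (by omega)
  have hb : qp q (a * t⁻¹) n ≠ 0 := qp_ne_zero fun k hk h =>
    h2 (1 + k) (by omega) (by omega) <| by rwa [← hpow, ← mul_inv_eq_one₀ ht, mul_right_comm]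
  have hsum :
      ∑ k ∈ Icc 1 n, (1 / (1 - (q ^ (2 * i + k))⁻¹) - 1 / (1 - (q ^ (2 * i + k))⁻¹ * t)) =
        -∑ k ∈ range n,
          (a * q ^ k / (1 - a * q ^ k) - a * t⁻¹ * q ^ k / (1 - a * t⁻¹ * q ^ k)) := by
    rw [← sum_neg_distrib, ← Ico_add_one_right_eq_Icc, sum_Ico_eq_sum_range,
      Nat.add_sub_cancel]
    refine sum_congr rfl fun k _ => ?_
    rw [one_div_one_sub_inv_sub_one_div_one_sub_inv_mul _ _ ht, mul_right_comm a t⁻¹, hpow]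
  rw [hsum]
  refine (hasDerivAt_qp_mul_div_qp_mul q a (a * t⁻¹) 1 n (by rwa [mul_one])
    (by rwa [mul_one])).congr_deriv ?_
  simp only [mul_one]
  ring

/-- The rational function
`s ↦ (q^{1+2i} t⁻¹ s;q)_n / (q^{1+2i} s;q)_n` is differentiable at `s = 1` with derivative
`−(q^{1+2i} t⁻¹;q)_n/(q^{1+2i};q)_n · ∑_{k=1}^n [1/(1 − q^{−2i−k}) − 1/(1 − q^{−2i−k} t)]`. -/
theorem statement11 (i n : ℕ) (q t : ℂ) (hq : q ≠ 0) (ht : t ≠ 0)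
    (h1 : ∀ k : ℕ, 1 ≤ k → k ≤ n → q ^ (2 * i + k) ≠ 1)
    (h2 : ∀ k : ℕ, 1 ≤ k → k ≤ n → q ^ (2 * i + k) ≠ t) :
    HasDerivAt
      (fun s : ℂ => qp q (q ^ (1 + 2 * i) * t⁻¹ * s) n / qp q (q ^ (1 + 2 * i) * s) n)
      (-(qp q (q ^ (1 + 2 * i) * t⁻¹) n / qp q (q ^ (1 + 2 * i)) n) *
        ∑ k ∈ Finset.Icc 1 n,
          (1 / (1 - (q ^ (2 * i + k))⁻¹) - 1 / (1 - (q ^ (2 * i + k))⁻¹ * t)))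
      1 :=
  statement11_general i n q t ht h1 h2
end
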